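/- arXiv:1301.0948 — 7 statements merged into one kernel-verified Lean document; each statement's English description precedes it below -/
import Mathlib

section
/- Let 𝒫 be a set of primes such that ∑_{p∈𝒫} p⁻¹ ≤ 1 + (1 − ∑_{p∈𝒫} p⁻²)^{1/2}. Then for every natural number k ≥ 1, the set ℕ_k(𝒫) is Erdős-best among primitive subsets of ℕ_{≥k}(𝒫): for every primitive set 𝒮 ⊆ ℕ_{≥k}(𝒫), ∑_{n∈𝒮} 1/(n log n) ≤ ∑_{n∈ℕ_k(𝒫)} 1/(n log n). -/
/-- A nonempty set of natural numbers is *primitive* if no element of the set divides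
another element of the set; the singleton set `{1}` is not considered primitive. -/
def Primitive (S : Set ℕ) : Prop :=
  S.Nonempty ∧ S ≠ {1} ∧ ∀ a ∈ S, ∀ b ∈ S, a ∣ b → a = b

/-- `NSet P` is the set `ℕ(P)` of natural numbers all of whose prime factors lie in `P`
(the multiplicative semigroup generated by `P`, which contains `1`). -/
def NSet (P : Set ℕ) : Set ℕ :=
  {n : ℕ | 0 < n ∧ ∀ p : ℕ, p.Prime → p ∣ n → p ∈ P}

/-- `NkSet P k = ℕ_k(P)`: the elements of `ℕ(P)` with exactly `k` prime factors
counted with multiplicity. -/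
def NkSet (P : Set ℕ) (k : ℕ) : Set ℕ :=
  {n ∈ NSet P | n.primeFactorsList.length = k}

/-- `NgeSet P k = ℕ_{≥k}(P)`: the elements of `ℕ(P)` with at least `k` prime factors
counted with multiplicity. -/
def NgeSet (P : Set ℕ) (k : ℕ) : Set ℕ :=
  {n ∈ NSet P | k ≤ n.primeFactorsList.length}

/-!
Since `1 / (n log n) = ∫_1^∞ n^{-t} dt`, it suffices to show
`∑_{n ∈ S} n^{-t} ≤ ∑_{n ∈ ℕ_k(P)} n^{-t}` for every `t > 1`. For the completely multiplicative
weight `w(n) = n^{-t}` and every finite `D ⊆ P`, the hypothesis on `P` gives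
`(∑_D w)² + ∑_D w² ≤ 2 ∑_D w`: the products of two primes of `D` weigh at most `D`. Splitting off
the least prime factor and inducting on `L`, any finite `B ⊆ ℕ_{L+1}(P)` weighs at most the set
of its divisors in `ℕ_L(P)`. So, going down from the top level, replacing the elements of a finite
primitive `F ⊆ ℕ_{≥k}(P)` by their divisors one level lower never decreases the weight
(primitivity keeps each level disjoint from the divisors pushed onto it), and the process ends
inside `ℕ_k(P)`.
-/

open Finset
open scoped ArithmeticFunction.Omega ENNReal
open ArithmeticFunction (cardFactors_apply cardFactors_mul cardFactors_apply_prime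
  cardFactors_eq_one_iff_prime cardFactors_eq_zero_iff_eq_zero_or_one cardFactors_pos_iff_one_lt)

lemma cardFactors_div_minFac (n : ℕ) : Ω (n / n.minFac) = Ω n - 1 := by
  match n with
  | 0 | 1 => simp
  | n + 2 => simp [cardFactors_apply, Nat.primeFactorsList_add_two]

lemma minFac_div_minFac_injective : Function.Injective fun n : ℕ => (n.minFac, n / n.minFac) :=
  fun a b h => by
    simp only [Prod.mk.injEq] at h
    rw [← Nat.mul_div_cancel' a.minFac_dvd, ← Nat.mul_div_cancel' b.minFac_dvd, h.2, h.1]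

lemma minFac_mul_of_dvd_div_minFac {n x : ℕ} (hn : n ≠ 1) (hx : x ∣ n / n.minFac) :
    (n.minFac * x).minFac = n.minFac := by
  have hp := Nat.minFac_prime hn
  have hq : (n.minFac * x).minFac.Prime :=
    Nat.minFac_prime fun h => hp.ne_one (Nat.eq_one_of_mul_eq_one_right h)
  refine le_antisymm (Nat.minFac_le_of_dvd hp.two_le (dvd_mul_right _ _)) ?_
  rcases hq.dvd_mul.1 (Nat.minFac_dvd _) with hqp | hqx
  · exact ((Nat.prime_dvd_prime_iff_eq hq hp).1 hqp).ge
  · exact Nat.minFac_le_of_dvd hq.two_le (hqx.trans (hx.trans (Nat.div_dvd_of_dvd n.minFac_dvd)))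

lemma two_mul_sum_filter_fst_le_snd {ι R : Type*} [LinearOrder ι] [CommSemiring R]
    (s : Finset ι) (f : ι → R) :
    2 * ∑ x ∈ s ×ˢ s with x.1 ≤ x.2, f x.1 * f x.2 = (∑ i ∈ s, f i) ^ 2 + ∑ i ∈ s, f i ^ 2 := by
  calc 2 * ∑ x ∈ s ×ˢ s with x.1 ≤ x.2, f x.1 * f x.2
      = ∑ i ∈ s, ∑ j ∈ s, ((if i ≤ j then f i * f j else 0) + if j ≤ i then f j * f i else 0) := by
        rw [two_mul, sum_filter, sum_product]
        nth_rewrite 2 [sum_comm]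
        simp only [← sum_add_distrib]
    _ = ∑ i ∈ s, ∑ j ∈ s, (f i * f j + if i = j then f i * f j else 0) := by
        refine sum_congr rfl fun i _ => sum_congr rfl fun j _ => ?_
        rcases lt_trichotomy i j with h | rfl | h
        · simp [h.le, h.not_ge, h.ne]
        · simp
        · simp [h.le, h.not_ge, h.ne', mul_comm]
    _ = (∑ i ∈ s, f i) ^ 2 + ∑ i ∈ s, f i ^ 2 := by
        simp [sum_add_distrib, sq, sum_mul_sum]

lemma sum_filter_minFac_eq {M : Type*} [CommSemiring M] (w : ℕ →* M) (B : Finset ℕ) (p : ℕ) :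
    ∑ n ∈ B with n.minFac = p, w n = w p * ∑ m ∈ {n ∈ B | n.minFac = p}.image (· / p), w m := by
  rw [sum_image, mul_sum]
  · refine sum_congr rfl fun n hn => ?_
    rw [← (mem_filter.1 hn).2, ← map_mul, Nat.mul_div_cancel' n.minFac_dvd]
  · intro a ha b hb hab
    obtain ⟨-, rfl⟩ := mem_filter.1 ha
    exact (Nat.div_left_inj a.minFac_dvd ((mem_filter.1 hb).2 ▸ b.minFac_dvd)).1 hab

lemma mem_NkSet {P : Set ℕ} {k n : ℕ} : n ∈ NkSet P k ↔ n ∈ NSet P ∧ Ω n = k := by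
  rw [cardFactors_apply]; rfl

lemma mem_NgeSet {P : Set ℕ} {k n : ℕ} : n ∈ NgeSet P k ↔ n ∈ NSet P ∧ k ≤ Ω n := by
  rw [cardFactors_apply]; rfl

lemma NkSet_subset_NgeSet (P : Set ℕ) (k : ℕ) : NkSet P k ⊆ NgeSet P k :=
  fun _ hn => ⟨hn.1, hn.2.ge⟩

lemma one_lt_of_mem_NgeSet {P : Set ℕ} {k n : ℕ} (hk : 1 ≤ k) (hn : n ∈ NgeSet P k) : 1 < n :=
  cardFactors_pos_iff_one_lt.1 (by have := (mem_NgeSet.1 hn).2; omega)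

lemma mem_NSet_of_dvd {P : Set ℕ} {n d : ℕ} (hn : n ∈ NSet P) (hd : d ∣ n) : d ∈ NSet P :=
  ⟨Nat.pos_of_dvd_of_pos hd hn.1, fun p hp hpd => hn.2 p hp (hpd.trans hd)⟩

lemma minFac_mem_of_mem_NSet {P : Set ℕ} {n : ℕ} (hn : n ∈ NSet P) (h1 : n ≠ 1) : n.minFac ∈ P :=
  hn.2 _ (Nat.minFac_prime h1) (Nat.minFac_dvd n)

lemma div_minFac_mem_NkSet {P : Set ℕ} {k n : ℕ} (hn : n ∈ NkSet P (k + 1)) :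
    n / n.minFac ∈ NkSet P k := by
  rw [mem_NkSet] at hn ⊢
  refine ⟨mem_NSet_of_dvd hn.1 (Nat.div_dvd_of_dvd n.minFac_dvd), ?_⟩
  rw [cardFactors_div_minFac, hn.2, Nat.add_sub_cancel]

lemma NkSet_zero (P : Set ℕ) : NkSet P 0 = {1} := by
  ext n
  simp only [mem_NkSet, cardFactors_eq_zero_iff_eq_zero_or_one, Set.mem_singleton_iff]
  constructor
  · rintro ⟨hn, rfl | rfl⟩
    · exact absurd hn.1 (lt_irrefl 0)
    · rfl
  · rintro rfl
    exact ⟨⟨one_pos, fun p hp hp1 => absurd (Nat.dvd_one.1 hp1) hp.ne_one⟩, Or.inr rfl⟩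

def divisorShadow (B : Finset ℕ) (L : ℕ) : Finset ℕ :=
  {d ∈ B.biUnion Nat.divisors | Ω d = L}

lemma mem_divisorShadow {B : Finset ℕ} {L d : ℕ} :
    d ∈ divisorShadow B L ↔ (∃ n ∈ B, d ∣ n ∧ n ≠ 0) ∧ Ω d = L := by
  simp [divisorShadow, Nat.mem_divisors]

lemma divisorShadow_mono {B B' : Finset ℕ} (h : B ⊆ B') (L : ℕ) :
    divisorShadow B L ⊆ divisorShadow B' L :=
  filter_subset_filter _ (biUnion_subset_biUnion_of_subset_left _ h)

lemma divisorShadow_divisorShadow_subset (B : Finset ℕ) (L L' : ℕ) :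
    divisorShadow (divisorShadow B L) L' ⊆ divisorShadow B L' := by
  intro d hd
  obtain ⟨⟨e, he, hde, -⟩, hd⟩ := mem_divisorShadow.1 hd
  obtain ⟨⟨n, hn, hen, hn0⟩, -⟩ := mem_divisorShadow.1 he
  exact mem_divisorShadow.2 ⟨⟨n, hn, hde.trans hen, hn0⟩, hd⟩

lemma divisorShadow_subset_NkSet {P : Set ℕ} {B : Finset ℕ} (hB : ↑B ⊆ NSet P) (L : ℕ) :
    ↑(divisorShadow B L) ⊆ NkSet P L := by
  intro d hd
  obtain ⟨⟨n, hn, hdn, -⟩, hd⟩ := mem_divisorShadow.1 hd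
  exact mem_NkSet.2 ⟨mem_NSet_of_dvd (hB hn) hdn, hd⟩

/-- By `two_mul_sum_filter_fst_le_snd`, the left side is twice the weight of the products `p * q`,
`p ≤ q`, of primes of `D`. -/
def PrimePairBound (w : ℕ →* ℝ≥0∞) (P : Set ℕ) : Prop :=
  ∀ D : Finset ℕ, ↑D ⊆ P → (∑ p ∈ D, w p) ^ 2 + ∑ p ∈ D, w p ^ 2 ≤ 2 * ∑ p ∈ D, w p

section Shadow

variable {P : Set ℕ} {w : ℕ →* ℝ≥0∞}

lemma sum_le_sum_divisorShadow_one (hw : PrimePairBound w P) {B : Finset ℕ}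
    (hB : ↑B ⊆ NkSet P 2) : ∑ n ∈ B, w n ≤ ∑ p ∈ divisorShadow B 1, w p := by
  set D := divisorShadow B 1
  have hDP : ↑D ⊆ P := fun d hd => by
    obtain ⟨⟨n, hn, hdn, -⟩, hd⟩ := mem_divisorShadow.1 hd
    exact (mem_NkSet.1 (hB hn)).1.2 d (cardFactors_eq_one_iff_prime.1 hd) hdn
  set φ : ℕ → ℕ × ℕ := fun n => (n.minFac, n / n.minFac)
  have hφ : ∀ n ∈ B, φ n ∈ {x ∈ D ×ˢ D | x.1 ≤ x.2} := by
    intro n hn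
    obtain ⟨hnP, hn2⟩ := mem_NkSet.1 (hB hn)
    have hp := Nat.minFac_prime (by rintro rfl; simp at hn2 : n ≠ 1)
    have hq : (n / n.minFac).Prime :=
      cardFactors_eq_one_iff_prime.1 (mem_NkSet.1 (div_minFac_mem_NkSet (hB hn))).2
    have hqn : n / n.minFac ∣ n := Nat.div_dvd_of_dvd n.minFac_dvd
    refine mem_filter.2 ⟨mem_product.2 ⟨?_, ?_⟩, Nat.minFac_le_of_dvd hq.two_le hqn⟩
    · exact mem_divisorShadow.2 ⟨⟨n, hn, n.minFac_dvd, hnP.1.ne'⟩, cardFactors_apply_prime hp⟩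
    · exact mem_divisorShadow.2 ⟨⟨n, hn, hqn, hnP.1.ne'⟩, cardFactors_apply_prime hq⟩
  have key : 2 * ∑ n ∈ B, w n ≤ 2 * ∑ p ∈ D, w p :=
    calc 2 * ∑ n ∈ B, w n = 2 * ∑ x ∈ B.image φ, w x.1 * w x.2 := by
          rw [sum_image minFac_div_minFac_injective.injOn]
          simp only [← map_mul, Nat.mul_div_cancel' (Nat.minFac_dvd _)]
      _ ≤ 2 * ∑ x ∈ D ×ˢ D with x.1 ≤ x.2, w x.1 * w x.2 := by
          gcongr
          exact image_subset_iff.2 hφ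
      _ = (∑ p ∈ D, w p) ^ 2 + ∑ p ∈ D, w p ^ 2 := two_mul_sum_filter_fst_le_snd D w
      _ ≤ 2 * ∑ p ∈ D, w p := hw D hDP
  exact (ENNReal.mul_le_mul_iff_right two_ne_zero ENNReal.ofNat_ne_top).1 key

theorem sum_le_sum_divisorShadow (hw : PrimePairBound w P) {L : ℕ} (hL : 1 ≤ L) {B : Finset ℕ}
    (hB : ↑B ⊆ NkSet P (L + 1)) : ∑ n ∈ B, w n ≤ ∑ d ∈ divisorShadow B L, w d := by
  induction L, hL using Nat.le_induction generalizing B with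
  | base => exact sum_le_sum_divisorShadow_one hw hB
  | succ L hL ih =>
    set Q := B.image Nat.minFac
    set F : ℕ → Finset ℕ := fun p => {n ∈ B | n.minFac = p}.image (· / p)
    set G : ℕ → Finset ℕ := fun p => (divisorShadow (F p) L).image (p * ·)
    have hF : ∀ p, ↑(F p) ⊆ NkSet P (L + 1) := by
      intro p m hm
      obtain ⟨n, hn, rfl⟩ := mem_image.1 hm
      obtain ⟨hnB, rfl⟩ := mem_filter.1 hn
      exact div_minFac_mem_NkSet (hB hnB)
    have hG : ∀ p, ∀ y ∈ G p, y.minFac = p ∧ y ∈ divisorShadow B (L + 1) := by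
      intro p y hy
      obtain ⟨x, hx, rfl⟩ := mem_image.1 hy
      obtain ⟨⟨m, hm, hxm, hm0⟩, hxL⟩ := mem_divisorShadow.1 hx
      obtain ⟨n, hn, rfl⟩ := mem_image.1 hm
      obtain ⟨hnB, rfl⟩ := mem_filter.1 hn
      obtain ⟨hnP, hnL⟩ := mem_NkSet.1 (hB hnB)
      have hn1 : n ≠ 1 := by rintro rfl; simp at hnL
      have hp := Nat.minFac_prime hn1
      refine ⟨minFac_mul_of_dvd_div_minFac hn1 hxm,
        mem_divisorShadow.2 ⟨⟨n, hnB, ?_, hnP.1.ne'⟩, ?_⟩⟩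
      · calc n.minFac * x ∣ n.minFac * (n / n.minFac) := mul_dvd_mul_left _ hxm
          _ = n := Nat.mul_div_cancel' n.minFac_dvd
      · rw [cardFactors_mul hp.ne_zero (ne_zero_of_dvd_ne_zero hm0 hxm), cardFactors_apply_prime hp,
          hxL, add_comm]
    calc ∑ n ∈ B, w n = ∑ p ∈ Q, ∑ n ∈ B with n.minFac = p, w n :=
          (sum_fiberwise_of_maps_to (fun n hn => mem_image_of_mem _ hn) _).symm
      _ = ∑ p ∈ Q, w p * ∑ m ∈ F p, w m := sum_congr rfl fun p _ => sum_filter_minFac_eq w B p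
      _ ≤ ∑ p ∈ Q, w p * ∑ x ∈ divisorShadow (F p) L, w x :=
          sum_le_sum fun p _ => mul_le_mul_right (ih (hF p)) _
      _ = ∑ p ∈ Q, ∑ y ∈ G p, w y := by
          refine sum_congr rfl fun p hp => ?_
          obtain ⟨n, -, rfl⟩ := mem_image.1 hp
          rw [sum_image fun _ _ _ _ h => Nat.eq_of_mul_eq_mul_left n.minFac_pos h, mul_sum]
          simp only [map_mul]
      _ = ∑ y ∈ Q.biUnion G, w y := by
          refine (sum_biUnion fun p _ p' _ hne => disjoint_left.2 fun y hy hy' => ?_).symm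
          exact hne ((hG p y hy).1.symm.trans (hG p' y hy').1)
      _ ≤ ∑ d ∈ divisorShadow B (L + 1), w d := by
          refine sum_le_sum_of_subset fun y hy => ?_
          obtain ⟨p, -, hy⟩ := mem_biUnion.1 hy
          exact (hG p y hy).2

end Shadow

section Primitive

variable {P : Set ℕ} {w : ℕ →* ℝ≥0∞}

lemma sum_filter_le_cardFactors_le_of_succ (hw : PrimePairBound w P) {F : Finset ℕ}
    (hF : ↑F ⊆ NSet P) (hanti : IsAntichain (· ∣ ·) (F : Set ℕ)) {j : ℕ} (hj : 1 ≤ j)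
    (ih : ∑ n ∈ F with j + 1 ≤ Ω n, w n ≤
      ∑ d ∈ divisorShadow {n ∈ F | j + 1 ≤ Ω n} (j + 1), w d) :
    ∑ n ∈ F with j ≤ Ω n, w n ≤ ∑ d ∈ divisorShadow {n ∈ F | j ≤ Ω n} j, w d := by
  set T := {n ∈ F | j ≤ Ω n}
  set T' := {n ∈ F | j + 1 ≤ Ω n}
  set E := {n ∈ T | Ω n = j}
  have hT' : {n ∈ T | ¬Ω n = j} = T' := by
    simp only [T, T', filter_filter]
    exact filter_congr fun n _ => by omega
  have hT'P : ↑T' ⊆ NSet P := (coe_subset.2 (filter_subset _ _)).trans hF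
  have hdisj : Disjoint E (divisorShadow T' j) := by
    refine disjoint_left.2 fun d hdE hd => ?_
    obtain ⟨⟨n, hn, hdn, -⟩, -⟩ := mem_divisorShadow.1 hd
    obtain ⟨hdT, hdj⟩ := mem_filter.1 hdE
    obtain ⟨hnF, hjn⟩ := mem_filter.1 hn
    exact hanti (mem_filter.1 hdT).1 hnF (by rintro rfl; omega) hdn
  have hsub : E ∪ divisorShadow T' j ⊆ divisorShadow T j := by
    refine union_subset (fun n hn => ?_) (divisorShadow_mono (monotone_filter_right _ ?_) j)
    · obtain ⟨hnT, hnj⟩ := mem_filter.1 hn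
      exact mem_divisorShadow.2 ⟨⟨n, hnT, dvd_rfl, (hF (mem_filter.1 hnT).1).1.ne'⟩, hnj⟩
    · exact fun n h => by omega
  calc ∑ n ∈ T, w n = ∑ n ∈ E, w n + ∑ n ∈ T', w n := by
        rw [← sum_filter_add_sum_filter_not T (fun n => Ω n = j), hT']
    _ ≤ ∑ n ∈ E, w n + ∑ d ∈ divisorShadow (divisorShadow T' (j + 1)) j, w d :=
        add_le_add le_rfl <| ih.trans <|
          sum_le_sum_divisorShadow hw hj (divisorShadow_subset_NkSet hT'P (j + 1))
    _ ≤ ∑ n ∈ E, w n + ∑ d ∈ divisorShadow T' j, w d := by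
        gcongr
        exact divisorShadow_divisorShadow_subset _ _ _
    _ = ∑ n ∈ E ∪ divisorShadow T' j, w n := (sum_union hdisj).symm
    _ ≤ ∑ d ∈ divisorShadow T j, w d := sum_le_sum_of_subset hsub

theorem sum_le_sum_divisorShadow_of_isAntichain (hw : PrimePairBound w P) {k : ℕ} (hk : 1 ≤ k)
    {F : Finset ℕ} (hF : ↑F ⊆ NgeSet P k) (hanti : IsAntichain (· ∣ ·) (F : Set ℕ)) :
    ∑ n ∈ F, w n ≤ ∑ d ∈ divisorShadow F k, w d := by
  have hT : {n ∈ F | k ≤ Ω n} = F := filter_true_of_mem fun n hn => (mem_NgeSet.1 (hF hn)).2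
  have hT_top : {n ∈ F | F.sup Ω + k ≤ Ω n} = ∅ :=
    filter_false_of_mem fun n hn => by have := le_sup (f := Ω) hn; omega
  rw [← hT]
  refine Nat.decreasingInduction'
    (P := fun j => ∑ n ∈ F with j ≤ Ω n, w n ≤ ∑ d ∈ divisorShadow {n ∈ F | j ≤ Ω n} j, w d)
    (fun j _ hkj => sum_filter_le_cardFactors_le_of_succ hw (hF.trans fun _ hn => hn.1) hanti
      (hk.trans hkj)) (Nat.le_add_left k (F.sup Ω)) ?_
  simp [hT_top]

theorem tsum_le_tsum_NkSet_of_isAntichain (hw : PrimePairBound w P) {k : ℕ} (hk : 1 ≤ k)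
    {S : Set ℕ} (hS : S ⊆ NgeSet P k) (hanti : IsAntichain (· ∣ ·) S) :
    ∑' n : S, w n ≤ ∑' n : NkSet P k, w n := by
  refine ENNReal.summable.tsum_le_of_sum_le fun F => ?_
  set F' := F.map (Function.Embedding.subtype _)
  have hF' : ↑F' ⊆ S := fun n hn => by
    obtain ⟨x, -, rfl⟩ := mem_map.1 hn
    exact x.2
  calc ∑ n ∈ F, w n = ∑ n ∈ F', w n := (sum_map F (Function.Embedding.subtype _) w).symm
    _ ≤ ∑ d ∈ divisorShadow F' k, w d :=
        sum_le_sum_divisorShadow_of_isAntichain hw hk (hF'.trans hS) (hanti.subset hF')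
    _ = ∑' d : ↑(divisorShadow F' k : Set ℕ), w d := (Finset.tsum_subtype _ _).symm
    _ ≤ ∑' n : NkSet P k, w n :=
        ENNReal.tsum_mono_subtype _
          (divisorShadow_subset_NkSet ((hF'.trans hS).trans fun _ h => h.1) k)

end Primitive

theorem tsum_NkSet_le_pow (w : ℕ →* ℝ≥0∞) (P : Set ℕ) (k : ℕ) :
    ∑' n : NkSet P k, w n ≤ (∑' p : P, w p) ^ k := by
  induction k with
  | zero => rw [NkSet_zero, tsum_singleton, map_one, pow_zero]
  | succ k ih =>
    let e : NkSet P (k + 1) → P × NkSet P k := fun n =>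
      (⟨n.1.minFac, minFac_mem_of_mem_NSet n.2.1
        (one_lt_of_mem_NgeSet k.succ_pos (NkSet_subset_NgeSet P _ n.2)).ne'⟩,
       ⟨n.1 / n.1.minFac, div_minFac_mem_NkSet n.2⟩)
    have he : Function.Injective e := fun a b h => Subtype.ext <| minFac_div_minFac_injective <| by
      simpa [e, Subtype.ext_iff] using h
    calc ∑' n : NkSet P (k + 1), w n = ∑' n, w (e n).1 * w (e n).2 :=
          tsum_congr fun n => by rw [← map_mul, Nat.mul_div_cancel' (Nat.minFac_dvd _)]
      _ ≤ ∑' x : P × NkSet P k, w x.1 * w x.2 :=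
          ENNReal.tsum_comp_le_tsum_of_injective he fun x => w x.1 * w x.2
      _ = (∑' p : P, w p) * ∑' n : NkSet P k, w n := by
          rw [ENNReal.tsum_prod']
          simp_rw [ENNReal.tsum_mul_left, ENNReal.tsum_mul_right]
      _ ≤ (∑' p : P, w p) ^ (k + 1) := by
          rw [pow_succ']
          exact mul_le_mul_right ih _

lemma sq_add_le_two_mul_of_le_one_add_sqrt {a a₂ e e₂ : ℝ} (ha₂ : 0 ≤ a₂) (ha₂a : a₂ ≤ a)
    (hae : a ≤ e) (ha₂e : a₂ ≤ e₂) (he : e ≤ 1 + √(1 - e₂)) : a ^ 2 + a₂ ≤ 2 * a := by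
  rcases le_or_gt a 1 with ha | ha
  · nlinarith
  · have hs : 0 ≤ 1 - e₂ := by
      by_contra h
      rw [Real.sqrt_eq_zero'.2 (by linarith)] at he
      linarith
    nlinarith [Real.sq_sqrt hs, Real.sqrt_nonneg (1 - e₂)]

lemma sum_le_tsum_of_coe_subset {ι : Type*} {s : Set ι} {f : ι → ℝ} (hf : ∀ i, 0 ≤ f i)
    (hsum : Summable fun i : s => f i) {D : Finset ι} (hD : ↑D ⊆ s) :
    ∑ i ∈ D, f i ≤ ∑' i : s, f i := by
  classical
  rw [← sum_subtype_of_mem f (p := (· ∈ s)) hD]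
  exact hsum.sum_le_tsum _ fun i _ => hf i

noncomputable def negRpowHom (t : ℝ) : ℕ →* ℝ≥0∞ where
  toFun n := ENNReal.ofReal ((n : ℝ) ^ (-t))
  map_one' := by simp
  map_mul' a b := by
    push_cast
    rw [Real.mul_rpow (Nat.cast_nonneg a) (Nat.cast_nonneg b), ENNReal.ofReal_mul (by positivity)]

lemma negRpowHom_apply (t : ℝ) (n : ℕ) : negRpowHom t n = ENNReal.ofReal ((n : ℝ) ^ (-t)) := rfl

lemma rpow_neg_le_inv {t : ℝ} (ht : 1 ≤ t) (n : ℕ) : (n : ℝ) ^ (-t) ≤ (n : ℝ)⁻¹ := by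
  rcases n.eq_zero_or_pos with rfl | hn
  · simp [Real.zero_rpow (by linarith : -t ≠ 0)]
  · rw [← Real.rpow_neg_one]
    exact Real.rpow_le_rpow_of_exponent_le (by exact_mod_cast hn) (by linarith)

theorem primePairBound_negRpowHom {P : Set ℕ}
    (hsummable : Summable fun p : P => (1 : ℝ) / (p : ℝ))
    (hineq : ∑' p : P, (1 : ℝ) / (p : ℝ) ≤ 1 + √(1 - ∑' p : P, (1 : ℝ) / ((p : ℝ) ^ 2)))
    {t : ℝ} (ht : 1 ≤ t) : PrimePairBound (negRpowHom t) P := by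
  intro D hD
  set a : ℕ → ℝ := fun p => (p : ℝ) ^ (-t)
  have ha : ∀ p, 0 ≤ a p := fun p => by positivity
  have hinv : ∀ p : ℕ, 0 ≤ (1 : ℝ) / p ∧ (1 : ℝ) / p ≤ 1 := fun p =>
    ⟨by positivity, by simpa using Nat.cast_inv_le_one p⟩
  have hap : ∀ p, a p ≤ 1 / p := fun p => by simpa using rpow_neg_le_inv ht p
  have hsq : ∀ p : ℕ, (1 : ℝ) / (p : ℝ) ^ 2 ≤ 1 / p := fun p => by
    rw [← one_div_pow]
    exact pow_le_of_le_one (hinv p).1 (hinv p).2 two_ne_zero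
  have hsummable₂ : Summable fun p : P => (1 : ℝ) / (p : ℝ) ^ 2 :=
    hsummable.of_nonneg_of_le (fun p => by positivity) fun p => hsq p
  have hA : ∑ p ∈ D, a p ≤ ∑' p : P, (1 : ℝ) / (p : ℝ) :=
    (sum_le_sum fun p _ => hap p).trans
      (sum_le_tsum_of_coe_subset (fun p => (hinv p).1) hsummable hD)
  have hA₂ : ∑ p ∈ D, a p ^ 2 ≤ ∑' p : P, (1 : ℝ) / (p : ℝ) ^ 2 := by
    refine (sum_le_sum fun p _ => ?_).trans
      (sum_le_tsum_of_coe_subset (f := fun p : ℕ => (1 : ℝ) / (p : ℝ) ^ 2)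
        (fun p => by positivity) hsummable₂ hD)
    rw [← one_div_pow]
    exact pow_le_pow_left₀ (ha p) (hap p) 2
  have hA₂A : ∑ p ∈ D, a p ^ 2 ≤ ∑ p ∈ D, a p :=
    sum_le_sum fun p _ => pow_le_of_le_one (ha p) ((hap p).trans (hinv p).2) two_ne_zero
  have hreal := sq_add_le_two_mul_of_le_one_add_sqrt (sum_nonneg fun p _ => by positivity)
    hA₂A hA hA₂ hineq
  have := ENNReal.ofReal_le_ofReal hreal
  rw [ENNReal.ofReal_add (by positivity) (sum_nonneg fun p _ => by positivity),
    ENNReal.ofReal_pow (sum_nonneg fun p _ => ha p), ENNReal.ofReal_mul zero_le_two,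
    ENNReal.ofReal_ofNat, ENNReal.ofReal_sum_of_nonneg fun p _ => ha p,
    ENNReal.ofReal_sum_of_nonneg fun p _ => by positivity] at this
  simp_rw [ENNReal.ofReal_pow (ha _)] at this
  exact this

open MeasureTheory in
lemma lintegral_negRpowHom {n : ℕ} (hn : 1 < n) :
    ∫⁻ t in Set.Ioi 1, negRpowHom t n = ENNReal.ofReal (1 / (n * Real.log n)) := by
  have hn' : (0 : ℝ) < n := by positivity
  have hlog : 0 < Real.log n := Real.log_pos (by exact_mod_cast hn)
  have hexp : ∀ t : ℝ, (n : ℝ) ^ (-t) = Real.exp (-Real.log n * t) := fun t => by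
    rw [Real.rpow_def_of_pos hn', mul_neg, neg_mul]
  simp_rw [negRpowHom_apply, hexp]
  rw [← ofReal_integral_eq_lintegral_ofReal (exp_neg_integrableOn_Ioi 1 hlog)
    (Filter.Eventually.of_forall fun t => (Real.exp_pos _).le),
    integral_exp_mul_Ioi (neg_lt_zero.2 hlog), mul_one, Real.exp_neg, Real.exp_log hn']
  congr 1
  field_simp

open MeasureTheory in
lemma tsum_ofReal_eq_lintegral {A : Set ℕ} (hA : ∀ n ∈ A, 1 < n) :
    ∑' n : A, ENNReal.ofReal (1 / (n * Real.log n)) =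
      ∫⁻ t in Set.Ioi 1, ∑' n : A, negRpowHom t n := by
  rw [lintegral_tsum fun n => Measurable.aemeasurable (by simp only [negRpowHom_apply]; fun_prop)]
  exact tsum_congr fun n => (lintegral_negRpowHom (hA n n.2)).symm

lemma tsum_ofReal_NkSet_ne_top {P : Set ℕ} (hsummable : Summable fun p : P => (1 : ℝ) / (p : ℝ))
    {k : ℕ} (hk : 1 ≤ k) :
    ∑' n : NkSet P k, ENNReal.ofReal (1 / (n * Real.log n)) ≠ ∞ := by
  have hle : ∀ n : NkSet P k,
      ENNReal.ofReal (1 / (n * Real.log n)) ≤ ENNReal.ofReal (Real.log 2)⁻¹ * negRpowHom 1 n := by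
    intro n
    have hn : (2 : ℝ) ≤ n := by
      exact_mod_cast one_lt_of_mem_NgeSet hk (NkSet_subset_NgeSet P k n.2)
    rw [negRpowHom_apply, Real.rpow_neg_one, ← ENNReal.ofReal_mul (by positivity)]
    refine ENNReal.ofReal_le_ofReal ?_
    have hlog : Real.log 2 ≤ Real.log n := Real.log_le_log two_pos hn
    have hlog2 : 0 < Real.log 2 := Real.log_pos one_lt_two
    rw [one_div, ← mul_inv]
    exact inv_anti₀ (by positivity) (by nlinarith)
  have hP : ∑' p : P, negRpowHom 1 p ≠ ∞ := by
    simp_rw [negRpowHom_apply, Real.rpow_neg_one, ← one_div]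
    rw [← ENNReal.ofReal_tsum_of_nonneg (fun p => by positivity) hsummable]
    exact ENNReal.ofReal_ne_top
  refine ne_top_of_le_ne_top ?_ (ENNReal.tsum_le_tsum hle)
  rw [ENNReal.tsum_mul_left]
  exact ENNReal.mul_ne_top ENNReal.ofReal_ne_top
    (ne_top_of_le_ne_top (ENNReal.pow_ne_top hP) (tsum_NkSet_le_pow _ P k))

lemma tsum_eq_toReal_tsum_ofReal {α : Type*} {f : α → ℝ} (hf : ∀ a, 0 ≤ f a) :
    ∑' a, f a = (∑' a, ENNReal.ofReal (f a)).toReal := by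
  rw [ENNReal.tsum_toReal_eq fun _ => ENNReal.ofReal_ne_top]
  exact tsum_congr fun a => (ENNReal.toReal_ofReal (hf a)).symm

theorem Nk_Erdos_best_general (P : Set ℕ)
    (hsummable : Summable fun p : P => (1 : ℝ) / (p : ℝ))
    (hineq : ∑' p : P, (1 : ℝ) / (p : ℝ) ≤
      1 + Real.sqrt (1 - ∑' p : P, (1 : ℝ) / ((p : ℝ) ^ 2)))
    (k : ℕ) (hk : 1 ≤ k)
    (S : Set ℕ) (hS : S ⊆ NgeSet P k) (hprim : Primitive S) :
    ∑' n : S, 1 / ((n : ℝ) * Real.log n) ≤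
      ∑' n : NkSet P k, 1 / ((n : ℝ) * Real.log n) := by
  have hanti : IsAntichain (· ∣ ·) S := fun a ha b hb hne hab => hne (hprim.2.2 a ha b hb hab)
  have hnonneg : ∀ n : ℕ, 0 ≤ 1 / ((n : ℝ) * Real.log n) := fun n => by
    have := Real.log_natCast_nonneg n
    positivity
  rw [tsum_eq_toReal_tsum_ofReal fun n : S => hnonneg n,
    tsum_eq_toReal_tsum_ofReal fun n : NkSet P k => hnonneg n]
  refine ENNReal.toReal_mono (tsum_ofReal_NkSet_ne_top hsummable hk) ?_
  rw [tsum_ofReal_eq_lintegral fun n hn => one_lt_of_mem_NgeSet hk (hS hn),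
    tsum_ofReal_eq_lintegral fun n hn => one_lt_of_mem_NgeSet hk (NkSet_subset_NgeSet P k hn)]
  exact MeasureTheory.setLIntegral_mono' measurableSet_Ioi fun t ht =>
    tsum_le_tsum_NkSet_of_isAntichain (primePairBound_negRpowHom hsummable hineq (le_of_lt ht))
      hk hS hanti

/-- **Theorem 5 (Banks–Martin).** If `P` is a set of primes with
`∑_{p∈P} p⁻¹ ≤ 1 + (1 - ∑_{p∈P} p⁻²)^{1/2}`, then for every `k ≥ 1` the set `ℕ_k(P)`
is Erdős-best among primitive subsets of `ℕ_{≥k}(P)`. -/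
theorem Nk_Erdos_best (P : Set ℕ) (hP : ∀ p ∈ P, Nat.Prime p)
    (hsummable : Summable fun p : P => (1 : ℝ) / (p : ℝ))
    (hineq : ∑' p : P, (1 : ℝ) / (p : ℝ) ≤
      1 + Real.sqrt (1 - ∑' p : P, (1 : ℝ) / ((p : ℝ) ^ 2)))
    (k : ℕ) (hk : 1 ≤ k)
    (S : Set ℕ) (hS : S ⊆ NgeSet P k) (hprim : Primitive S) :
    ∑' n : S, 1 / ((n : ℝ) * Real.log n) ≤
      ∑' n : NkSet P k, 1 / ((n : ℝ) * Real.log n) :=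
  Nk_Erdos_best_general P hsummable hineq k hk S hS hprim
end

section
/- Let t > 1 be a real number, and let 𝒫 be a set of primes satisfying ∑_{p∈𝒫} p^{−t} ≤ 1 + (1 − ∑_{p∈𝒫} p^{−2t})^{1/2}. Then for every natural number k ≥ 1, the set ℕ_k(𝒫) is t-best among primitive subsets of ℕ_{≥k}(𝒫): for every primitive set 𝒮 ⊆ ℕ_{≥k}(𝒫), ∑_{n∈𝒮} n^{−t} ≤ ∑_{n∈ℕ_k(𝒫)} n^{−t}. -/
/-!
Fix a finite set `Q` of primes and let `h_j = ∑_{n ∈ ℕ_j(Q)} n^{-t}`. The divisibility order on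
`ℕ(Q)`, weighted by `n^{-t}`, has the normalized matching property: a set `E ⊆ ℕ_{n+1}(Q)` and
its shadow `∂E ⊆ ℕ_n(Q)` satisfy `w(E) / h_{n+1} ≤ w(∂E) / h_n`. This is proved by induction on
`Q`: adjoining a prime `q` convolves `(h_j)` with the geometric sequence `(q^{-ta})`, which
preserves log-concavity, and a flow along the chain of powers of `q` carries the matching
property over to the product.

For every finite `Q ⊆ P` the hypothesis on `∑ p^{-t}` gives
`2 h_2 = (∑_{p∈Q} p^{-t})² + ∑_{p∈Q} p^{-2t} ≤ 2 h_1`, so by log-concavity `h_{j+1} ≤ h_j` for every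
`j ≥ 1`. Hence replacing the top layer of a finite
primitive set by its shadow does not decrease its weight and keeps it primitive; pushing it down
layer by layer ends in a subset of `ℕ_k(P)`.
-/

namespace BanksMartin

open Finset
open scoped Pointwise ArithmeticFunction.Omega

section LogConcave

variable {g : ℕ → ℝ}

def LogConcave (g : ℕ → ℝ) : Prop := ∀ j, g j * g (j + 2) ≤ g (j + 1) ^ 2

theorem LogConcave.antitone_ratio (hpos : ∀ j, 0 < g j) (hg : LogConcave g) :
    Antitone fun j => g (j + 1) / g j :=
  antitone_nat_of_succ_le fun j => by
    rw [div_le_div_iff₀ (hpos _) (hpos _)]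
    nlinarith [hg j]

theorem LogConcave.mul_le_mul_shift (hpos : ∀ j, 0 < g j) (hg : LogConcave g) {i j : ℕ}
    (hij : i ≤ j) (s : ℕ) : g (j + s) * g i ≤ g j * g (i + s) := by
  induction s with
  | zero => rw [add_zero, add_zero, mul_comm]
  | succ s ih =>
    have hratio := hg.antitone_ratio hpos (by omega : i + s ≤ j + s)
    simp only at hratio
    calc g (j + (s + 1)) * g i = g (j + s + 1) / g (j + s) * (g (j + s) * g i) := by
          rw [← add_assoc]; field_simp [(hpos (j + s)).ne']
      _ ≤ g (i + s + 1) / g (i + s) * (g j * g (i + s)) :=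
          mul_le_mul hratio ih (mul_pos (hpos _) (hpos _)).le (div_pos (hpos _) (hpos _)).le
      _ = g j * g (i + (s + 1)) := by
          rw [← add_assoc]; field_simp [(hpos (i + s)).ne']

end LogConcave

section GeomConv

variable {x : ℝ} {g : ℕ → ℝ}

def geomConv (x : ℝ) (g : ℕ → ℝ) (n : ℕ) : ℝ := ∑ a ∈ range (n + 1), x ^ a * g (n - a)

def geomConvTail (x : ℝ) (g : ℕ → ℝ) (c n : ℕ) : ℝ := ∑ a ∈ Ico (c + 1) (n + 1), x ^ a * g (n - a)

theorem geomConv_succ (n : ℕ) : geomConv x g (n + 1) = g (n + 1) + x * geomConv x g n := by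
  rw [geomConv, sum_range_succ', geomConv, mul_sum]
  simp only [pow_succ, pow_zero, one_mul, Nat.sub_zero, Nat.succ_sub_succ]
  rw [add_comm]
  exact congrArg₂ _ rfl (sum_congr rfl fun a _ => by ring)

theorem geomConv_eq_add_tail (n : ℕ) : geomConv x g n = g n + geomConvTail x g 0 n := by
  rw [geomConv, range_eq_Ico, sum_eq_sum_Ico_succ_bot (Nat.succ_pos n)]
  simp [geomConvTail]

theorem geomConvTail_eq_add (g : ℕ → ℝ) {c n : ℕ} (hcn : c < n) :
    geomConvTail x g c n = x ^ (c + 1) * g (n - (c + 1)) + geomConvTail x g (c + 1) n :=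
  sum_eq_sum_Ico_succ_bot (by omega) _

theorem geomConvTail_self (n : ℕ) : geomConvTail x g n n = 0 := by simp [geomConvTail]

theorem geomConv_pos (hx : 0 < x) (hpos : ∀ j, 0 < g j) (n : ℕ) : 0 < geomConv x g n :=
  sum_pos (fun a _ => mul_pos (pow_pos hx a) (hpos _)) nonempty_range_add_one

theorem geomConvTail_nonneg (hx : 0 < x) (hpos : ∀ j, 0 < g j) (c n : ℕ) :
    0 ≤ geomConvTail x g c n :=
  sum_nonneg fun a _ => mul_nonneg (pow_nonneg hx.le a) (hpos _).le

theorem geomConvTail_zero_succ (n : ℕ) : geomConvTail x g 0 (n + 1) = x * geomConv x g n := by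
  have h := geomConv_eq_add_tail (x := x) (g := g) (n + 1)
  rw [geomConv_succ] at h
  linarith

theorem mul_geomConvTail_le (hx : 0 < x) (hpos : ∀ j, 0 < g j) (hg : LogConcave g) {c n : ℕ}
    (hcn : c ≤ n) :
    g (n + 1) * geomConvTail x g c n ≤ x ^ (c + 1) * g (n - c) * geomConv x g n := by
  rw [geomConvTail, sum_Ico_eq_sum_range, mul_sum]
  calc ∑ b ∈ range (n + 1 - (c + 1)), g (n + 1) * (x ^ (c + 1 + b) * g (n - (c + 1 + b)))
      ≤ ∑ b ∈ range (n + 1 - (c + 1)), x ^ (c + 1) * g (n - c) * (x ^ b * g (n - b)) := by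
        refine sum_le_sum fun b hb => ?_
        have hb : b < n - c := by rw [mem_range] at hb; omega
        have key := hg.mul_le_mul_shift hpos (show n - (c + 1 + b) ≤ n - b by omega) (b + 1)
        rw [show n - b + (b + 1) = n + 1 by omega,
          show n - (c + 1 + b) + (b + 1) = n - c by omega] at key
        calc _ = x ^ (c + 1 + b) * (g (n + 1) * g (n - (c + 1 + b))) := by ring
          _ ≤ x ^ (c + 1 + b) * (g (n - b) * g (n - c)) := by gcongr
          _ = _ := by rw [pow_add]; ring
    _ = x ^ (c + 1) * g (n - c) * ∑ b ∈ range (n - c), x ^ b * g (n - b) := by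
        rw [mul_sum, show n + 1 - (c + 1) = n - c by omega]
    _ ≤ x ^ (c + 1) * g (n - c) * geomConv x g n := by
        refine mul_le_mul_of_nonneg_left ?_ (mul_nonneg (pow_nonneg hx.le _) (hpos _).le)
        exact sum_le_sum_of_subset_of_nonneg (range_subset_range.2 (by omega))
          fun a _ _ => mul_nonneg (pow_nonneg hx.le a) (hpos _).le

theorem logConcave_geomConv (hx : 0 < x) (hpos : ∀ j, 0 < g j) (hg : LogConcave g) :
    LogConcave (geomConv x g) := by
  intro n
  have key : g (n + 2) * geomConv x g n ≤ g (n + 1) * geomConv x g (n + 1) := by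
    have h := mul_geomConvTail_le hx hpos hg (Nat.zero_le (n + 1))
    rw [geomConvTail_zero_succ, zero_add, pow_one, Nat.sub_zero] at h
    nlinarith
  have hsucc := geomConv_succ (x := x) (g := g) n
  calc geomConv x g n * geomConv x g (n + 2)
      = g (n + 2) * geomConv x g n + x * geomConv x g n * geomConv x g (n + 1) := by
        rw [geomConv_succ (n + 1)]; ring
    _ ≤ g (n + 1) * geomConv x g (n + 1) + x * geomConv x g n * geomConv x g (n + 1) := by
        linarith
    _ = geomConv x g (n + 1) ^ 2 := by rw [hsucc]; ring

def flowCoeff (x : ℝ) (g : ℕ → ℝ) (n a : ℕ) : ℝ :=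
  x ^ (a + 1) * g (n - a) * geomConv x g n - g (n + 1) * geomConvTail x g a n

theorem flowCoeff_nonneg (hx : 0 < x) (hpos : ∀ j, 0 < g j) (hg : LogConcave g) {n a : ℕ}
    (ha : a ≤ n) : 0 ≤ flowCoeff x g n a :=
  sub_nonneg.2 (mul_geomConvTail_le hx hpos hg ha)

theorem flowCoeff_le (hx : 0 < x) (hpos : ∀ j, 0 < g j) (n a : ℕ) :
    flowCoeff x g n a ≤ x ^ a * g (n - a) * geomConv x g (n + 1) := by
  rw [flowCoeff, geomConv_succ, pow_succ]
  nlinarith [mul_nonneg (hpos (n + 1)).le (geomConvTail_nonneg hx hpos a n),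
    mul_pos (mul_pos (pow_pos hx a) (hpos (n - a))) (hpos (n + 1))]

theorem sum_mul_eq_of_split {e c α ρ : ℕ → ℝ} (n : ℕ) (h0 : c 0 = ρ 0)
    (hmid : ∀ a < n, c (a + 1) = α a + ρ (a + 1)) (hlast : c (n + 1) = α n) :
    ∑ a ∈ range (n + 2), e a * c a = ∑ a ∈ range (n + 1), (e (a + 1) * α a + e a * ρ a) := by
  rw [sum_add_distrib, sum_range_succ', sum_range_succ, sum_range_succ' (fun a => e a * ρ a),
    sum_range_succ, h0, hlast]
  have : ∑ a ∈ range n, e (a + 1) * c (a + 1)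
      = ∑ a ∈ range n, e (a + 1) * α a + ∑ a ∈ range n, e (a + 1) * ρ (a + 1) := by
    rw [← sum_add_distrib]
    exact sum_congr rfl fun a ha => by rw [hmid a (mem_range.1 ha)]; ring
  rw [this]; ring

theorem flow_term {e e' d D s G₀ G₁ K : ℝ} (hG₀ : 0 < G₀) (hG₁ : 0 < G₁) (hs : 0 ≤ s)
    (hsK : s ≤ K * G₀) (hed : e * G₀ ≤ d * G₁) (he' : e' ≤ D) (hd : d ≤ D) :
    e' * (s / G₀) + e * ((K * G₀ - s) / G₁) ≤ D * K := by
  have h1 : e * ((K * G₀ - s) / G₁) ≤ d * ((K * G₀ - s) / G₀) := by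
    rw [mul_div_assoc', mul_div_assoc', div_le_div_iff₀ hG₁ hG₀]
    nlinarith [mul_le_mul_of_nonneg_left hed (sub_nonneg.2 hsK)]
  calc e' * (s / G₀) + e * ((K * G₀ - s) / G₁)
      ≤ D * (s / G₀) + D * ((K * G₀ - s) / G₀) := by
        refine add_le_add (mul_le_mul_of_nonneg_right he' (div_nonneg hs hG₀.le)) ?_
        exact h1.trans (mul_le_mul_of_nonneg_right hd (div_nonneg (sub_nonneg.2 hsK) hG₀.le))
    _ = D * K := by field_simp; ring

theorem geomConv_flow (hx : 0 < x) (hpos : ∀ j, 0 < g j) (hg : LogConcave g) (n : ℕ)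
    {e d D : ℕ → ℝ} (hed : ∀ a ≤ n, e a * g (n - a) ≤ d a * g (n - a + 1))
    (hD₁ : ∀ a ≤ n, e (a + 1) ≤ D a) (hD₂ : ∀ a ≤ n, d a ≤ D a) :
    (∑ a ∈ range (n + 2), x ^ a * e a) * geomConv x g n
      ≤ (∑ a ∈ range (n + 1), x ^ a * D a) * geomConv x g (n + 1) := by
  set H := geomConv x g
  set s := flowCoeff x g n
  -- The coefficient `x ^ (a + 1) * H n` of `e (a + 1)` on the left is split between the terms
  -- `a` and `a + 1` on the right; the tail estimate behind `flowCoeff_nonneg` is what makes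
  -- both shares nonnegative.
  have h0 : x ^ 0 * H n = (x ^ 0 * H (n + 1) * g (n - 0) - s 0) / g (n - 0 + 1) := by
    rw [eq_div_iff (hpos _).ne', Nat.sub_zero]
    simp only [s, H, flowCoeff, geomConv_succ, Nat.sub_zero]
    linear_combination g (n + 1) * geomConv_eq_add_tail (x := x) (g := g) n
  have hmid : ∀ a < n, x ^ (a + 1) * H n
      = s a / g (n - a) + (x ^ (a + 1) * H (n + 1) * g (n - (a + 1)) - s (a + 1))
          / g (n - (a + 1) + 1) := by
    intro a ha
    rw [show n - (a + 1) + 1 = n - a by omega, ← add_div, eq_div_iff (hpos _).ne']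
    simp only [s, H, flowCoeff, geomConv_succ]
    linear_combination g (n + 1) * geomConvTail_eq_add (x := x) g ha
  have hlast : x ^ (n + 1) * H n = s n / g (n - n) := by
    rw [eq_div_iff (hpos _).ne']
    simp only [s, H, flowCoeff, geomConvTail_self]
    ring
  rw [sum_mul, sum_congr rfl fun a _ => (show x ^ a * e a * H n = e a * (x ^ a * H n) by ring),
    sum_mul_eq_of_split (e := e) (α := fun a => s a / g (n - a))
      (ρ := fun a => (x ^ a * H (n + 1) * g (n - a) - s a) / g (n - a + 1)) n h0 hmid hlast,
    sum_mul]
  refine sum_le_sum fun a ha => ?_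
  have ha : a ≤ n := Nat.lt_succ_iff.1 (mem_range.1 ha)
  calc _ ≤ D a * (x ^ a * H (n + 1)) :=
        flow_term (hpos _) (hpos _) (flowCoeff_nonneg hx hpos hg ha)
          (by simpa only [mul_right_comm] using flowCoeff_le hx hpos n a)
          (hed a ha) (hD₁ a ha) (hD₂ a ha)
    _ = x ^ a * D a * H (n + 1) := by ring

end GeomConv

section Arithmetic

open ArithmeticFunction

theorem eq_of_dvd_of_cardFactors_le {a b : ℕ} (hab : a ∣ b) (hb : b ≠ 0) (h : Ω b ≤ Ω a) :
    a = b := by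
  obtain ⟨c, rfl⟩ := hab
  rw [cardFactors_mul (left_ne_zero_of_mul hb) (right_ne_zero_of_mul hb)] at h
  have hc : Ω c = 0 := by omega
  rcases cardFactors_eq_zero_iff_eq_zero_or_one.1 hc with rfl | rfl
  · simp at hb
  · rw [mul_one]

theorem factorization_prime_pow_mul {q u : ℕ} (hq : q.Prime) (hu : ¬ q ∣ u) (a : ℕ) :
    (q ^ a * u).factorization q = a := by
  have hu0 : u ≠ 0 := by rintro rfl; exact hu (dvd_zero q)
  rw [Nat.factorization_mul (pow_ne_zero a hq.ne_zero) hu0, Finsupp.add_apply,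
    Nat.factorization_eq_zero_of_not_dvd hu, hq.factorization_pow, Finsupp.single_eq_same,
    add_zero]

theorem one_mem_NSet (P : Set ℕ) : 1 ∈ NSet P :=
  ⟨one_pos, fun _ hp hd => absurd (Nat.dvd_one.1 hd) hp.ne_one⟩

theorem mul_mem_NSet {P : Set ℕ} {a b : ℕ} (ha : a ∈ NSet P) (hb : b ∈ NSet P) :
    a * b ∈ NSet P :=
  ⟨Nat.mul_pos ha.1 hb.1, fun p hp hd =>
    ((Nat.Prime.dvd_mul hp).1 hd).elim (ha.2 p hp) (hb.2 p hp)⟩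

theorem prime_mem_NSet {P : Set ℕ} {p : ℕ} (hp : p.Prime) (hpP : p ∈ P) : p ∈ NSet P :=
  ⟨hp.pos, fun _ hr hd => (Nat.prime_dvd_prime_iff_eq hr hp).1 hd ▸ hpP⟩

theorem mem_NSet_of_dvd {P : Set ℕ} {u m : ℕ} (hm : m ∈ NSet P) (hd : u ∣ m) : u ∈ NSet P :=
  ⟨Nat.pos_of_dvd_of_pos hd hm.1, fun r hr hru => hm.2 r hr (hru.trans hd)⟩

theorem mem_pow_iff {Q : Finset ℕ} (hQ : ∀ p ∈ Q, p.Prime) {j n : ℕ} :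
    n ∈ Q ^ j ↔ n ∈ NSet Q ∧ Ω n = j := by
  induction j generalizing n with
  | zero =>
    rw [pow_zero, Finset.mem_one]
    refine ⟨fun h => h ▸ ⟨one_mem_NSet _, cardFactors_one⟩, fun ⟨hn, hΩ⟩ => ?_⟩
    exact (cardFactors_eq_zero_iff_eq_zero_or_one.1 hΩ).resolve_left hn.1.ne'
  | succ j ih =>
    rw [pow_succ, Finset.mem_mul]
    constructor
    · rintro ⟨m, hm, p, hp, rfl⟩
      obtain ⟨hmN, hmΩ⟩ := ih.1 hm
      refine ⟨mul_mem_NSet hmN (prime_mem_NSet (hQ p hp) hp), ?_⟩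
      rw [cardFactors_mul hmN.1.ne' (hQ p hp).ne_zero, hmΩ,
        cardFactors_apply_prime (hQ p hp)]
    · rintro ⟨hn, hΩ⟩
      have hp : n.minFac.Prime := Nat.minFac_prime fun h => by
        simp [h] at hΩ
      have hmul : n / n.minFac * n.minFac = n := Nat.div_mul_cancel (Nat.minFac_dvd n)
      have hm : n / n.minFac ∈ NSet Q := mem_NSet_of_dvd hn (Nat.div_dvd_of_dvd (Nat.minFac_dvd n))
      refine ⟨n / n.minFac, ih.2 ⟨hm, ?_⟩, n.minFac, hn.2 _ hp (Nat.minFac_dvd n), hmul⟩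
      rw [← hmul, cardFactors_mul hm.1.ne' hp.ne_zero,
        cardFactors_apply_prime hp] at hΩ
      omega

end Arithmetic

noncomputable def weight (t : ℝ) : ℕ →* ℝ where
  toFun n := (n : ℝ) ^ (-t)
  map_one' := by simp
  map_mul' a b := by push_cast; exact Real.mul_rpow (Nat.cast_nonneg a) (Nat.cast_nonneg b)

noncomputable def levelSum (t : ℝ) (Q : Finset ℕ) (j : ℕ) : ℝ := ∑ n ∈ Q ^ j, weight t n

section Levels

open ArithmeticFunction

theorem weight_apply (t : ℝ) (n : ℕ) : weight t n = (n : ℝ) ^ (-t) := rfl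

theorem weight_nonneg (t : ℝ) (n : ℕ) : 0 ≤ weight t n := Real.rpow_nonneg n.cast_nonneg _

theorem weight_pos (t : ℝ) {n : ℕ} (hn : 0 < n) : 0 < weight t n :=
  Real.rpow_pos_of_pos (Nat.cast_pos.2 hn) _

theorem sum_biUnion_image_pow_mul (t : ℝ) {q : ℕ} (hq : q.Prime) (s : Finset ℕ)
    {T : ℕ → Finset ℕ} (hT : ∀ a, ∀ u ∈ T a, ¬ q ∣ u) :
    ∑ n ∈ s.biUnion (fun a => (T a).image (q ^ a * ·)), weight t n
      = ∑ a ∈ s, weight t q ^ a * ∑ u ∈ T a, weight t u := by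
  have hdisj : (s : Set ℕ).PairwiseDisjoint fun a => (T a).image (q ^ a * ·) := by
    intro a _ b _ hab
    simp only [Function.onFun, disjoint_left, mem_image]
    rintro _ ⟨u, hu, rfl⟩ ⟨v, hv, huv⟩
    exact hab (by rw [← factorization_prime_pow_mul hq (hT a u hu) a,
      ← factorization_prime_pow_mul hq (hT b v hv) b, huv])
  rw [sum_biUnion hdisj]
  refine sum_congr rfl fun a _ => ?_
  rw [sum_image fun u _ v _ huv => Nat.eq_of_mul_eq_mul_left (pow_pos hq.pos a) huv, mul_sum]
  simp only [map_mul, map_pow]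

def slice (Q : Finset ℕ) (q N : ℕ) (E : Finset ℕ) (a : ℕ) : Finset ℕ :=
  (Q ^ (N - a)).filter (q ^ a * · ∈ E)

variable {Q : Finset ℕ} {q : ℕ}

theorem not_dvd_of_mem_slice (hq : q.Prime) (hqQ : q ∉ Q) (hQ : ∀ p ∈ Q, p.Prime)
    {E : Finset ℕ} {N a u : ℕ} (hu : u ∈ slice Q q N E a) : ¬ q ∣ u :=
  fun hd => hqQ (((mem_pow_iff hQ).1 (mem_filter.1 hu).1).1.2 q hq hd)

theorem biUnion_slice (hq : q.Prime) (hqQ : q ∉ Q) (hQ : ∀ p ∈ Q, p.Prime) {E : Finset ℕ}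
    {N : ℕ} (hE : E ⊆ insert q Q ^ N) :
    (range (N + 1)).biUnion (fun a => (slice Q q N E a).image (q ^ a * ·)) = E := by
  have hQ' : ∀ p ∈ insert q Q, p.Prime := by simpa [hq] using hQ
  ext n
  simp only [slice, mem_biUnion, mem_image, mem_filter, mem_range]
  constructor
  · rintro ⟨a, -, m, ⟨-, hm⟩, rfl⟩
    exact hm
  · intro hn
    obtain ⟨hnN, hnΩ⟩ := (mem_pow_iff hQ').1 (hE hn)
    set a := n.factorization q
    have hmul : q ^ a * (n / q ^ a) = n := Nat.ordProj_mul_ordCompl_eq_self n q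
    have hm : n / q ^ a ∈ NSet Q := by
      refine ⟨Nat.div_pos (Nat.ordProj_le q hnN.1.ne') (pow_pos hq.pos a), fun r hr hrd => ?_⟩
      have hrq : r ≠ q := by rintro rfl; exact Nat.not_dvd_ordCompl hq hnN.1.ne' hrd
      simpa [hrq] using hnN.2 r hr (hrd.trans (Nat.div_dvd_of_dvd (Nat.ordProj_dvd n q)))
    have hΩ := cardFactors_mul (pow_ne_zero a hq.ne_zero) hm.1.ne'
    rw [hmul, hnΩ, cardFactors_apply_prime_pow hq] at hΩ
    exact ⟨a, by omega, n / q ^ a, ⟨(mem_pow_iff hQ).2 ⟨hm, by omega⟩, by rwa [hmul]⟩, hmul⟩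

theorem slice_pow {N a : ℕ} (ha : a ≤ N) :
    slice Q q N (insert q Q ^ N) a = Q ^ (N - a) := by
  refine filter_true_of_mem fun m hm => ?_
  rw [show N = a + (N - a) by omega, pow_add]
  exact mul_mem_mul (pow_mem_pow (mem_insert_self q Q)) (pow_subset_pow_left (subset_insert q Q) hm)

theorem sum_weight_eq_sum_slice (t : ℝ) (hq : q.Prime) (hqQ : q ∉ Q) (hQ : ∀ p ∈ Q, p.Prime)
    {E : Finset ℕ} {N : ℕ} (hE : E ⊆ insert q Q ^ N) :
    ∑ n ∈ E, weight t n
      = ∑ a ∈ range (N + 1), weight t q ^ a * ∑ u ∈ slice Q q N E a, weight t u := by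
  conv_lhs => rw [← biUnion_slice hq hqQ hQ hE]
  exact sum_biUnion_image_pow_mul t hq _ fun a u => not_dvd_of_mem_slice hq hqQ hQ

theorem levelSum_insert (t : ℝ) (hq : q.Prime) (hqQ : q ∉ Q) (hQ : ∀ p ∈ Q, p.Prime) (N : ℕ) :
    levelSum t (insert q Q) N = geomConv (weight t q) (levelSum t Q) N := by
  rw [levelSum, sum_weight_eq_sum_slice t hq hqQ hQ subset_rfl, geomConv]
  refine sum_congr rfl fun a ha => ?_
  rw [slice_pow (Nat.lt_succ_iff.1 (mem_range.1 ha)), levelSum]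

theorem levelSum_singleton (t : ℝ) (q j : ℕ) : levelSum t {q} j = weight t q ^ j := by
  rw [levelSum, singleton_pow, sum_singleton, map_pow]

theorem levelSum_pos (t : ℝ) (hQ : ∀ p ∈ Q, p.Prime) (hne : Q.Nonempty) (j : ℕ) :
    0 < levelSum t Q j := by
  obtain ⟨p, hp⟩ := hne
  exact sum_pos' (fun n _ => weight_nonneg t n)
    ⟨p ^ j, pow_mem_pow hp, weight_pos t (pow_pos (hQ p hp).pos j)⟩

theorem logConcave_levelSum (t : ℝ) (hQ : ∀ p ∈ Q, p.Prime) (hne : Q.Nonempty) :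
    LogConcave (levelSum t Q) := by
  induction hne using Nonempty.cons_induction with
  | singleton q => intro j; simp only [levelSum_singleton]; exact le_of_eq (by ring)
  | cons q Q hqQ hne ih =>
    rw [cons_eq_insert] at hQ ⊢
    have hQ' : ∀ p ∈ Q, p.Prime := fun p hp => hQ p (mem_insert_of_mem hp)
    have hq : q.Prime := hQ q (mem_insert_self q Q)
    rw [show levelSum t (insert q Q) = _ from funext (levelSum_insert t hq hqQ hQ')]
    exact logConcave_geomConv (weight_pos t hq.pos) (levelSum_pos t hQ' hne) (ih hQ')

end Levels

def shadow (j : ℕ) (E : Finset ℕ) : Finset ℕ := E.biUnion fun m => m.divisors.filter (Ω · = j)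

def HasNormalizedMatching (t : ℝ) (Q : Finset ℕ) : Prop :=
  ∀ n, ∀ E ⊆ Q ^ (n + 1), (∑ m ∈ E, weight t m) * levelSum t Q n
    ≤ (∑ u ∈ shadow n E, weight t u) * levelSum t Q (n + 1)

section NormalizedMatching

open ArithmeticFunction

variable {t : ℝ} {Q : Finset ℕ} {q : ℕ}

theorem mem_shadow {j : ℕ} {E : Finset ℕ} {u : ℕ} :
    u ∈ shadow j E ↔ ∃ m ∈ E, u ∣ m ∧ m ≠ 0 ∧ Ω u = j := by
  simp [shadow, Nat.mem_divisors, and_assoc]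

theorem hasNormalizedMatching_singleton (t : ℝ) (hq : q.Prime) : HasNormalizedMatching t {q} := by
  intro n E hE
  rw [singleton_pow, subset_singleton_iff] at hE
  rcases hE with rfl | rfl
  · simp [shadow]
  have hmem : q ^ n ∈ shadow n {q ^ (n + 1)} :=
    mem_shadow.2 ⟨_, mem_singleton_self _, pow_dvd_pow q n.le_succ, pow_ne_zero _ hq.ne_zero,
      cardFactors_apply_prime_pow hq⟩
  rw [sum_singleton, levelSum_singleton, levelSum_singleton]
  calc weight t (q ^ (n + 1)) * weight t q ^ n = weight t (q ^ n) * weight t q ^ (n + 1) := by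
        simp only [map_pow]; ring
    _ ≤ _ := mul_le_mul_of_nonneg_right (single_le_sum (fun u _ => weight_nonneg t u) hmem)
        (pow_nonneg (weight_nonneg t q) _)

theorem not_dvd_of_mem_slice_union_shadow (hq : q.Prime) (hqQ : q ∉ Q) (hQ : ∀ p ∈ Q, p.Prime)
    {E : Finset ℕ} {N j a u : ℕ}
    (hu : u ∈ slice Q q N E (a + 1) ∪ shadow j (slice Q q N E a)) : ¬ q ∣ u := by
  rcases mem_union.1 hu with hu | hu
  · exact not_dvd_of_mem_slice hq hqQ hQ hu
  · obtain ⟨m, hm, hum, -⟩ := mem_shadow.1 hu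
    exact fun hqu => not_dvd_of_mem_slice hq hqQ hQ hm (hqu.trans hum)

theorem pow_mul_mem_shadow (hQ : ∀ p ∈ Q, p.Prime) (hq : q.Prime) {E : Finset ℕ} {n a u : ℕ}
    (ha : a ≤ n) (hu : u ∈ slice Q q (n + 1) E (a + 1) ∪ shadow (n - a) (slice Q q (n + 1) E a)) :
    q ^ a * u ∈ shadow n E := by
  have hqa : q ^ a ≠ 0 := pow_ne_zero a hq.ne_zero
  rcases mem_union.1 hu with hu | hu
  · obtain ⟨hu, huE⟩ := mem_filter.1 hu
    obtain ⟨huN, huΩ⟩ := (mem_pow_iff hQ).1 hu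
    refine mem_shadow.2 ⟨_, huE, mul_dvd_mul_right (pow_dvd_pow q a.le_succ) u,
      mul_ne_zero (pow_ne_zero _ hq.ne_zero) huN.1.ne', ?_⟩
    rw [cardFactors_mul hqa huN.1.ne', cardFactors_apply_prime_pow hq, huΩ]
    omega
  · obtain ⟨m, hm, hum, hm0, huΩ⟩ := mem_shadow.1 hu
    have hu0 : u ≠ 0 := ne_zero_of_dvd_ne_zero hm0 hum
    refine mem_shadow.2 ⟨_, (mem_filter.1 hm).2, mul_dvd_mul_left _ hum, mul_ne_zero hqa hm0, ?_⟩
    rw [cardFactors_mul hqa hu0, cardFactors_apply_prime_pow hq, huΩ]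
    omega

theorem sum_slice_union_shadow_le (t : ℝ) (hq : q.Prime) (hqQ : q ∉ Q) (hQ : ∀ p ∈ Q, p.Prime)
    (E : Finset ℕ) (n : ℕ) :
    ∑ a ∈ range (n + 1), weight t q ^ a *
        ∑ u ∈ slice Q q (n + 1) E (a + 1) ∪ shadow (n - a) (slice Q q (n + 1) E a), weight t u
      ≤ ∑ u ∈ shadow n E, weight t u := by
  rw [← sum_biUnion_image_pow_mul t hq _
    fun a u => not_dvd_of_mem_slice_union_shadow hq hqQ hQ]
  refine sum_le_sum_of_subset_of_nonneg ?_ fun u _ _ => weight_nonneg t u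
  refine biUnion_subset.2 fun a ha => image_subset_iff.2 fun u hu => ?_
  exact pow_mul_mem_shadow hQ hq (Nat.lt_succ_iff.1 (mem_range.1 ha)) hu

theorem HasNormalizedMatching.insert (hq : q.Prime) (hqQ : q ∉ Q) (hQ : ∀ p ∈ Q, p.Prime)
    (hne : Q.Nonempty) (h : HasNormalizedMatching t Q) :
    HasNormalizedMatching t (insert q Q) := by
  intro n E hE
  set F := slice Q q (n + 1) E
  have hx := weight_pos t hq.pos
  have hpos := levelSum_pos t hQ hne
  have hflow := geomConv_flow hx hpos (logConcave_levelSum t hQ hne) n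
    (e := fun a => ∑ m ∈ F a, weight t m) (d := fun a => ∑ u ∈ shadow (n - a) (F a), weight t u)
    (D := fun a => ∑ u ∈ F (a + 1) ∪ shadow (n - a) (F a), weight t u)
    (fun a ha => h (n - a) (F a) fun m hm => by
      simpa only [show n + 1 - a = n - a + 1 by omega] using (mem_filter.1 hm).1)
    (fun a _ => sum_le_sum_of_subset_of_nonneg subset_union_left fun u _ _ => weight_nonneg t u)
    (fun a _ => sum_le_sum_of_subset_of_nonneg subset_union_right fun u _ _ => weight_nonneg t u)
  rw [levelSum_insert t hq hqQ hQ, levelSum_insert t hq hqQ hQ,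
    sum_weight_eq_sum_slice t hq hqQ hQ hE]
  exact hflow.trans (mul_le_mul_of_nonneg_right (sum_slice_union_shadow_le t hq hqQ hQ E n)
    (geomConv_pos hx hpos _).le)

theorem hasNormalizedMatching (t : ℝ) (hQ : ∀ p ∈ Q, p.Prime) : HasNormalizedMatching t Q := by
  rcases Q.eq_empty_or_nonempty with rfl | hne
  · intro n E hE
    rw [empty_pow n.succ_ne_zero, subset_empty] at hE
    simp [hE, shadow]
  induction hne using Nonempty.cons_induction with
  | singleton q => exact hasNormalizedMatching_singleton t (hQ q (mem_singleton_self q))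
  | cons q Q hqQ hne ih =>
    rw [cons_eq_insert] at hQ ⊢
    have hQ' : ∀ p ∈ Q, p.Prime := fun p hp => hQ p (mem_insert_of_mem hp)
    exact (ih hQ').insert (hQ q (mem_insert_self q Q)) hqQ hQ' hne

end NormalizedMatching

section Monotonicity

variable {t : ℝ} {Q : Finset ℕ}

theorem levelSum_zero (t : ℝ) (Q : Finset ℕ) : levelSum t Q 0 = 1 := by
  rw [levelSum, pow_zero, ← singleton_one, sum_singleton, map_one]

theorem levelSum_one (t : ℝ) (Q : Finset ℕ) : levelSum t Q 1 = ∑ p ∈ Q, weight t p := by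
  rw [levelSum, pow_one]

theorem two_mul_levelSum_two (t : ℝ) (hQ : ∀ p ∈ Q, p.Prime) :
    2 * levelSum t Q 2 = (∑ p ∈ Q, weight t p) ^ 2 + ∑ p ∈ Q, weight t p ^ 2 := by
  induction Q using Finset.induction_on with
  | empty => simp [levelSum]
  | insert q Q hqQ ih =>
    have hQ' : ∀ p ∈ Q, p.Prime := fun p hp => hQ p (mem_insert_of_mem hp)
    rw [levelSum_insert t (hQ q (mem_insert_self q Q)) hqQ hQ', geomConv, sum_insert hqQ,
      sum_insert hqQ]
    simp only [sum_range_succ, range_zero, sum_empty, Nat.sub_self, Nat.add_one_sub_one,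
      levelSum_zero, levelSum_one]
    linear_combination ih hQ'

theorem levelSum_succ_le (t : ℝ) (hQ : ∀ p ∈ Q, p.Prime)
    (hQ₂ : (∑ p ∈ Q, weight t p) ^ 2 + ∑ p ∈ Q, weight t p ^ 2 ≤ 2 * ∑ p ∈ Q, weight t p)
    {j : ℕ} (hj : 1 ≤ j) : levelSum t Q (j + 1) ≤ levelSum t Q j := by
  rcases Q.eq_empty_or_nonempty with rfl | hne
  · simp [levelSum, empty_pow (Nat.one_le_iff_ne_zero.1 hj)]
  have hpos := levelSum_pos t hQ hne
  have h₂₁ : levelSum t Q 2 ≤ levelSum t Q 1 := by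
    rw [levelSum_one]
    linarith [two_mul_levelSum_two t hQ]
  have hratio : levelSum t Q (j + 1) / levelSum t Q j ≤ 1 :=
    ((logConcave_levelSum t hQ hne).antitone_ratio hpos hj).trans
      ((div_le_one (hpos 1)).2 h₂₁)
  exact (div_le_one (hpos j)).1 hratio

theorem sq_add_le_two_mul {A B α β : ℝ} (hB : 0 ≤ B) (hBA : B ≤ A) (hAα : A ≤ α) (hBβ : B ≤ β)
    (hα : α ≤ 1 + √(1 - β)) : A ^ 2 + B ≤ 2 * A := by
  rcases le_or_gt A 1 with hA | hA
  · nlinarith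
  · have h := (Real.le_sqrt' (by linarith : 0 < α - 1)).1 (by linarith : α - 1 ≤ √(1 - β))
    nlinarith [mul_nonneg (sub_nonneg.2 hAα) (by linarith : (0 : ℝ) ≤ α + A - 2)]

theorem sum_le_tsum_subtype {ι : Type*} {P : Set ι} {f : ι → ℝ} (hf : Summable f)
    (hf₀ : ∀ i, 0 ≤ f i) {s : Finset ι} (hs : ↑s ⊆ P) : ∑ i ∈ s, f i ≤ ∑' i : P, f i := by
  rw [_root_.tsum_subtype, ← sum_congr rfl fun i hi => Set.indicator_of_mem (hs hi) f]
  exact (hf.indicator P).sum_le_tsum s fun i _ => Set.indicator_nonneg (fun i _ => hf₀ i) i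

theorem summable_weight {t : ℝ} (ht : 1 < t) : Summable (weight t ·) :=
  Real.summable_nat_rpow.2 (by linarith)

theorem weight_sq (t : ℝ) (n : ℕ) : weight t n ^ 2 = weight (2 * t) n := by
  rw [weight_apply, weight_apply, ← Real.rpow_mul_natCast n.cast_nonneg, neg_mul_comm]
  push_cast
  ring_nf

theorem sum_weight_sq_le_two_mul (ht : 1 < t) {P : Set ℕ}
    (hP : ∑' p : P, (p : ℝ) ^ (-t) ≤ 1 + √(1 - ∑' p : P, (p : ℝ) ^ (-(2 * t))))
    (hQ : ∀ p ∈ Q, p.Prime) (hQP : ↑Q ⊆ P) :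
    (∑ p ∈ Q, weight t p) ^ 2 + ∑ p ∈ Q, weight t p ^ 2 ≤ 2 * ∑ p ∈ Q, weight t p := by
  refine sq_add_le_two_mul (sum_nonneg fun p _ => sq_nonneg _) (sum_le_sum fun p hp => ?_)
    (sum_le_tsum_subtype (summable_weight ht) (weight_nonneg t) hQP) ?_ hP
  · refine pow_le_of_le_one (weight_nonneg t p) ?_ two_ne_zero
    exact Real.rpow_le_one_of_one_le_of_nonpos (mod_cast (hQ p hp).one_lt.le) (by linarith)
  · simp only [weight_sq]
    exact sum_le_tsum_subtype (summable_weight (by linarith)) (weight_nonneg _) hQP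

end Monotonicity

def pushDown (n : ℕ) (E : Finset ℕ) : Finset ℕ :=
  E.filter (Ω · ≤ n) ∪ shadow n (E.filter (n < Ω ·))

section PushDown

variable {t : ℝ} {Q : Finset ℕ}

theorem sum_le_sum_shadow_of_levelSum_le (hQ : ∀ p ∈ Q, p.Prime) {n : ℕ} {E : Finset ℕ}
    (hE : E ⊆ Q ^ (n + 1)) (hle : levelSum t Q (n + 1) ≤ levelSum t Q n) :
    ∑ m ∈ E, weight t m ≤ ∑ u ∈ shadow n E, weight t u := by
  rcases Q.eq_empty_or_nonempty with rfl | hne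
  · rw [empty_pow n.succ_ne_zero, subset_empty] at hE
    simp [hE, shadow]
  refine le_of_mul_le_mul_right ?_ (levelSum_pos t hQ hne n)
  exact (hasNormalizedMatching t hQ n E hE).trans
    (mul_le_mul_of_nonneg_left hle (sum_nonneg fun u _ => weight_nonneg t u))

theorem sum_le_sum_pushDown (hQ : ∀ p ∈ Q, p.Prime) {n : ℕ} {E : Finset ℕ}
    (hEQ : ∀ m ∈ E, m ∈ NSet Q) (hEΩ : ∀ m ∈ E, Ω m ≤ n + 1)
    (hanti : IsAntichain (· ∣ ·) (E : Set ℕ)) (hle : levelSum t Q (n + 1) ≤ levelSum t Q n) :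
    ∑ m ∈ E, weight t m ≤ ∑ u ∈ pushDown n E, weight t u := by
  have htop : E.filter (n < Ω ·) ⊆ Q ^ (n + 1) := fun m hm => by
    obtain ⟨hmE, hmΩ⟩ := mem_filter.1 hm
    exact (mem_pow_iff hQ).2 ⟨hEQ m hmE, le_antisymm (hEΩ m hmE) hmΩ⟩
  have hdisj : Disjoint (E.filter (Ω · ≤ n)) (shadow n (E.filter (n < Ω ·))) := by
    refine disjoint_left.2 fun u hu hsh => ?_
    obtain ⟨huE, huΩ⟩ := mem_filter.1 hu
    obtain ⟨m, hm, hum, -⟩ := mem_shadow.1 hsh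
    obtain ⟨hmE, hmΩ⟩ := mem_filter.1 hm
    exact hanti huE hmE (by rintro rfl; omega) hum
  rw [pushDown, sum_union hdisj, ← sum_filter_add_sum_filter_not E (Ω · ≤ n)]
  simp only [not_le]
  exact add_le_add_right (sum_le_sum_shadow_of_levelSum_le hQ htop hle) _

theorem isAntichain_pushDown {E : Finset ℕ} (hanti : IsAntichain (· ∣ ·) (E : Set ℕ))
    (hE₀ : ∀ m ∈ E, m ≠ 0) (n : ℕ) : IsAntichain (· ∣ ·) (pushDown n E : Set ℕ) := by
  have hsh : ∀ u ∈ shadow n (E.filter (n < Ω ·)), u ≠ 0 ∧ Ω u = n ∧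
      ∃ m ∈ E, u ∣ m ∧ n < Ω m := fun u hu => by
    obtain ⟨m, hm, hum, hm₀, huΩ⟩ := mem_shadow.1 hu
    obtain ⟨hmE, hmΩ⟩ := mem_filter.1 hm
    exact ⟨ne_zero_of_dvd_ne_zero hm₀ hum, huΩ, m, hmE, hum, hmΩ⟩
  intro a ha b hb hab hdvd
  simp only [BanksMartin.pushDown, coe_union, coe_filter, Set.mem_union, Set.mem_ofPred_eq,
    mem_coe] at ha hb
  rcases ha with ⟨haE, haΩ⟩ | ha <;> rcases hb with ⟨hbE, hbΩ⟩ | hb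
  · exact hanti haE hbE hab hdvd
  · obtain ⟨-, -, m, hmE, hbm, hmΩ⟩ := hsh b hb
    exact hanti haE hmE (by rintro rfl; omega) (hdvd.trans hbm)
  · obtain ⟨-, haΩ, -⟩ := hsh a ha
    exact hab (eq_of_dvd_of_cardFactors_le hdvd (hE₀ b hbE) (by omega))
  · obtain ⟨-, haΩ, -⟩ := hsh a ha
    obtain ⟨hb₀, hbΩ, -⟩ := hsh b hb
    exact hab (eq_of_dvd_of_cardFactors_le hdvd hb₀ (by omega))

theorem shadow_pushDown_subset (k n : ℕ) (E : Finset ℕ) :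
    shadow k (pushDown n E) ⊆ shadow k E := by
  intro u hu
  obtain ⟨w, hw, huw, hw₀, huΩ⟩ := mem_shadow.1 hu
  rcases mem_union.1 hw with hw | hw
  · exact mem_shadow.2 ⟨w, (mem_filter.1 hw).1, huw, hw₀, huΩ⟩
  · obtain ⟨m, hm, hwm, hm₀, -⟩ := mem_shadow.1 hw
    exact mem_shadow.2 ⟨m, (mem_filter.1 hm).1, huw.trans hwm, hm₀, huΩ⟩

theorem mem_pushDown_bounds {P : Set ℕ} {k n : ℕ} (hkn : k ≤ n) {E : Finset ℕ}
    (hE : ∀ m ∈ E, m ∈ NSet P ∧ k ≤ Ω m) {u : ℕ} (hu : u ∈ pushDown n E) :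
    u ∈ NSet P ∧ k ≤ Ω u ∧ Ω u ≤ n := by
  rcases mem_union.1 hu with hu | hu
  · obtain ⟨huE, huΩ⟩ := mem_filter.1 hu
    exact ⟨(hE u huE).1, (hE u huE).2, huΩ⟩
  · obtain ⟨m, hm, hum, -, huΩ⟩ := mem_shadow.1 hu
    exact ⟨mem_NSet_of_dvd (hE m (mem_filter.1 hm).1).1 hum, huΩ ▸ hkn, huΩ.le⟩

theorem sum_le_sum_shadow (hQ : ∀ p ∈ Q, p.Prime) {k : ℕ}
    (hmono : ∀ j, k ≤ j → levelSum t Q (j + 1) ≤ levelSum t Q j) {n : ℕ} (hkn : k ≤ n)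
    {E : Finset ℕ} (hE : ∀ m ∈ E, m ∈ NSet Q ∧ k ≤ Ω m ∧ Ω m ≤ n)
    (hanti : IsAntichain (· ∣ ·) (E : Set ℕ)) :
    ∑ m ∈ E, weight t m ≤ ∑ u ∈ shadow k E, weight t u := by
  induction n, hkn using Nat.le_induction generalizing E with
  | base =>
    refine sum_le_sum_of_subset_of_nonneg (fun m hm => ?_) fun u _ _ => weight_nonneg t u
    obtain ⟨hmQ, hkm, hmk⟩ := hE m hm
    exact mem_shadow.2 ⟨m, hm, dvd_rfl, hmQ.1.ne', le_antisymm hmk hkm⟩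
  | succ n hkn ih =>
    calc ∑ m ∈ E, weight t m ≤ ∑ u ∈ pushDown n E, weight t u :=
          sum_le_sum_pushDown hQ (fun m hm => (hE m hm).1) (fun m hm => (hE m hm).2.2) hanti
            (hmono n hkn)
      _ ≤ ∑ u ∈ shadow k (pushDown n E), weight t u :=
          ih (fun u hu => mem_pushDown_bounds hkn (fun m hm => ⟨(hE m hm).1, (hE m hm).2.1⟩) hu)
            (isAntichain_pushDown hanti (fun m hm => (hE m hm).1.1.ne') n)
      _ ≤ ∑ u ∈ shadow k E, weight t u :=
          sum_le_sum_of_subset_of_nonneg (shadow_pushDown_subset k n E)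
            fun u _ _ => weight_nonneg t u

end PushDown

section PrimitiveSets

open ArithmeticFunction

theorem isAntichain_of_primitive {S : Set ℕ} (h : Primitive S) : IsAntichain (· ∣ ·) S :=
  fun a ha b hb hab hdvd => hab (h.2.2 a ha b hb hdvd)

theorem shadow_subset_NkSet {P : Set ℕ} {k : ℕ} {E : Finset ℕ} (hE : ∀ m ∈ E, m ∈ NSet P) :
    ↑(shadow k E) ⊆ NkSet P k := fun u hu => by
  obtain ⟨m, hm, hum, -, huΩ⟩ := mem_shadow.1 hu
  exact ⟨mem_NSet_of_dvd (hE m hm) hum, by rw [← cardFactors_apply, huΩ]⟩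

theorem sum_le_sum_shadow_of_subset_NgeSet {t : ℝ} (ht : 1 < t) {P : Set ℕ}
    (hP : ∑' p : P, (p : ℝ) ^ (-t) ≤ 1 + √(1 - ∑' p : P, (p : ℝ) ^ (-(2 * t))))
    {k : ℕ} (hk : 1 ≤ k) {E : Finset ℕ} (hE : ↑E ⊆ NgeSet P k)
    (hanti : IsAntichain (· ∣ ·) (E : Set ℕ)) :
    ∑ m ∈ E, weight t m ≤ ∑ u ∈ shadow k E, weight t u := by
  set Q := E.biUnion Nat.primeFactors
  have hQ : ∀ p ∈ Q, p.Prime := fun p hp => by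
    obtain ⟨m, -, hpm⟩ := mem_biUnion.1 hp
    exact Nat.prime_of_mem_primeFactors hpm
  have hQP : ↑Q ⊆ P := fun p hp => by
    obtain ⟨m, hm, hpm⟩ := mem_biUnion.1 (mem_coe.1 hp)
    exact (hE hm).1.2 p (Nat.prime_of_mem_primeFactors hpm) (Nat.dvd_of_mem_primeFactors hpm)
  have hEQ : ∀ m ∈ E, m ∈ NSet Q ∧ k ≤ Ω m ∧ Ω m ≤ E.sup (Ω ·) ⊔ k := fun m hm =>
    ⟨⟨(hE hm).1.1, fun p hp hpm =>
      mem_biUnion.2 ⟨m, hm, Nat.mem_primeFactors.2 ⟨hp, hpm, (hE hm).1.1.ne'⟩⟩⟩,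
      by rw [cardFactors_apply]; exact (hE hm).2, le_sup_of_le_left (le_sup (f := (Ω ·)) hm)⟩
  exact sum_le_sum_shadow hQ
    (fun j hj => levelSum_succ_le t hQ (sum_weight_sq_le_two_mul ht hP hQ hQP) (hk.trans hj))
    le_sup_right hEQ hanti

end PrimitiveSets

end BanksMartin

open BanksMartin Finset

theorem Nk_t_best_general (t : ℝ) (ht : 1 < t) (P : Set ℕ)
    (hineq : ∑' p : P, (p : ℝ) ^ (-t) ≤
      1 + Real.sqrt (1 - ∑' p : P, (p : ℝ) ^ (-(2 * t))))
    (k : ℕ) (hk : 1 ≤ k)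
    (S : Set ℕ) (hS : S ⊆ NgeSet P k) (hprim : Primitive S) :
    ∑' n : S, (n : ℝ) ^ (-t) ≤ ∑' n : NkSet P k, (n : ℝ) ^ (-t) := by
  refine tsum_le_of_sum_le' (tsum_nonneg fun n => weight_nonneg t n) fun F => ?_
  set E := F.map (Function.Embedding.subtype (· ∈ S))
  have hES : ↑E ⊆ S := fun m hm => by
    obtain ⟨n, -, rfl⟩ := mem_map.1 hm
    exact n.2
  calc ∑ n ∈ F, ((n : ℕ) : ℝ) ^ (-t) = ∑ m ∈ E, weight t m := by
        rw [sum_map]; rfl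
    _ ≤ ∑ u ∈ shadow k E, weight t u := sum_le_sum_shadow_of_subset_NgeSet ht hineq hk
          (hES.trans hS) ((isAntichain_of_primitive hprim).subset hES)
    _ ≤ ∑' n : NkSet P k, (n : ℝ) ^ (-t) := sum_le_tsum_subtype (summable_weight ht)
          (weight_nonneg t) (shadow_subset_NkSet fun m hm => (hS (hES hm)).1)

/-- **Theorem 6 (Banks–Martin).** Let `t > 1` and let `P` be a set of primes with
`∑_{p∈P} p^{-t} ≤ 1 + (1 - ∑_{p∈P} p^{-2t})^{1/2}`. Then for every `k ≥ 1` the set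
`ℕ_k(P)` is `t`-best among primitive subsets of `ℕ_{≥k}(P)`. -/
theorem Nk_t_best (t : ℝ) (ht : 1 < t) (P : Set ℕ) (hP : ∀ p ∈ P, Nat.Prime p)
    (hineq : ∑' p : P, (p : ℝ) ^ (-t) ≤
      1 + Real.sqrt (1 - ∑' p : P, (p : ℝ) ^ (-(2 * t))))
    (k : ℕ) (hk : 1 ≤ k)
    (S : Set ℕ) (hS : S ⊆ NgeSet P k) (hprim : Primitive S) :
    ∑' n : S, (n : ℝ) ^ (-t) ≤ ∑' n : NkSet P k, (n : ℝ) ^ (-t) :=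
  Nk_t_best_general t ht P hineq k hk S hS hprim
end

section
/- Let t > 1 be a real number such that ∑_{p prime} p^{−t} ≤ 1 + (1 − ∑_{p prime} p^{−2t})^{1/2}. Then every set of primes 𝒫 is t-best among primitive subsets of ℕ(𝒫): for every primitive set 𝒮 ⊆ ℕ(𝒫), ∑_{n∈𝒮} n^{−t} ≤ ∑_{p∈𝒫} p^{−t}. -/
open Finset ArithmeticFunction
open scoped ArithmeticFunction.Omega

section NkSet

variable {P : Set ℕ} {k m n q : ℕ}

theorem mem_nkSet_iff : n ∈ NkSet P k ↔ n ∈ NSet P ∧ Ω n = k := by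
  rw [cardFactors_apply]; rfl

theorem mem_nSet_of_dvd {N : ℕ} (hN : N ∈ NSet P) (hn : n ∣ N) : n ∈ NSet P :=
  ⟨Nat.pos_of_dvd_of_pos hn hN.1, fun p hp hpn => hN.2 p hp (hpn.trans hn)⟩

theorem mem_nkSet_one_iff : n ∈ NkSet P 1 ↔ n.Prime ∧ n ∈ P := by
  rw [mem_nkSet_iff, cardFactors_eq_one_iff_prime]
  exact ⟨fun ⟨hn, hp⟩ => ⟨hp, hn.2 n hp dvd_rfl⟩,
    fun ⟨hp, hnP⟩ => ⟨⟨hp.pos, fun r hr hrn => (Nat.prime_dvd_prime_iff_eq hr hp).1 hrn ▸ hnP⟩, hp⟩⟩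

theorem nkSet_empty_succ : NkSet ∅ (k + 1) = ∅ := by
  refine Set.eq_empty_of_forall_notMem fun n hn => ?_
  obtain ⟨⟨-, hnP⟩, hΩ⟩ := mem_nkSet_iff.1 hn
  have hn1 : n ≠ 1 := by rintro rfl; simp at hΩ
  obtain ⟨p, hp, hpn⟩ := Nat.exists_prime_and_dvd hn1
  exact hnP p hp hpn

theorem mem_nkSet_of_not_dvd (hn : n ∈ NkSet (insert q P) k) (hqn : ¬ q ∣ n) : n ∈ NkSet P k := by
  obtain ⟨⟨hn0, hnP⟩, hΩ⟩ := mem_nkSet_iff.1 hn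
  refine mem_nkSet_iff.2 ⟨⟨hn0, fun p hp hpn => ?_⟩, hΩ⟩
  exact (hnP p hp hpn).resolve_left (by rintro rfl; exact hqn hpn)

theorem mem_nkSet_of_prime_mul_mem (hq : q.Prime) (h : q * m ∈ NkSet P (k + 1)) :
    m ∈ NkSet P k := by
  obtain ⟨hqm, hΩ⟩ := mem_nkSet_iff.1 h
  have hm : m ≠ 0 := right_ne_zero_of_mul hqm.1.ne'
  rw [cardFactors_mul hq.ne_zero hm, cardFactors_apply_prime hq, add_comm] at hΩ
  exact mem_nkSet_iff.2 ⟨mem_nSet_of_dvd hqm (dvd_mul_left m q), by omega⟩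

theorem div_mem_nkSet {p : ℕ} (hp : p.Prime) (hpn : p ∣ n) (hn : n ∈ NkSet P (k + 1)) :
    n / p ∈ NkSet P k :=
  mem_nkSet_of_prime_mul_mem hp (by rwa [Nat.mul_div_cancel' hpn])

end NkSet

def cofactors (W : Finset ℕ) (q : ℕ) : Finset ℕ :=
  (W.filter (q ∣ ·)).image (· / q)

theorem mem_cofactors {W : Finset ℕ} {q m : ℕ} (hq : q ≠ 0) : m ∈ cofactors W q ↔ q * m ∈ W := by
  simp only [cofactors, mem_image, mem_filter]
  constructor
  · rintro ⟨n, ⟨hn, hqn⟩, rfl⟩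
    rwa [Nat.mul_div_cancel' hqn]
  · intro h
    exact ⟨q * m, ⟨h, dvd_mul_right q m⟩, Nat.mul_div_cancel_left m (Nat.pos_of_ne_zero hq)⟩

def divShadow (W : Finset ℕ) : Finset ℕ :=
  W.biUnion fun n => n.primeFactors.image (n / ·)

theorem mem_divShadow {W : Finset ℕ} {m : ℕ} :
    m ∈ divShadow W ↔ ∃ n ∈ W, ∃ p ∈ n.primeFactors, n / p = m := by
  simp only [divShadow, mem_biUnion, mem_image]

theorem divShadow_filter_subset (W : Finset ℕ) (q : ℕ) :
    divShadow (W.filter (¬ q ∣ ·)) ⊆ (divShadow W).filter (¬ q ∣ ·) := by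
  intro m hm
  obtain ⟨n, hn, p, hp, rfl⟩ := mem_divShadow.1 hm
  rw [mem_filter] at hn ⊢
  exact ⟨mem_divShadow.2 ⟨n, hn.1, p, hp, rfl⟩, fun hq => hn.2 (hq.trans (Nat.div_dvd_of_dvd
    (Nat.dvd_of_mem_primeFactors hp)))⟩

theorem divShadow_cofactors_subset (W : Finset ℕ) {q : ℕ} (hq : q ≠ 0) :
    divShadow (cofactors W q) ⊆ cofactors (divShadow W) q := by
  intro m hm
  obtain ⟨n, hn, p, hp, rfl⟩ := mem_divShadow.1 hm
  rw [mem_cofactors hq] at hn ⊢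
  have hp' : p ∈ (q * n).primeFactors :=
    Nat.primeFactors_mono (dvd_mul_left n q) (mul_ne_zero hq (Nat.mem_primeFactors.1 hp).2.2) hp
  rw [← Nat.mul_div_assoc q (Nat.dvd_of_mem_primeFactors hp)]
  exact mem_divShadow.2 ⟨q * n, hn, p, hp', rfl⟩

section Weighted

variable {f : ℕ → ℝ}

theorem sum_eq_sum_filter_add_mul_sum_cofactors (hmul : ∀ m n, f (m * n) = f m * f n)
    (W : Finset ℕ) (q : ℕ) :
    ∑ n ∈ W, f n = ∑ n ∈ W.filter (¬ q ∣ ·), f n + f q * ∑ m ∈ cofactors W q, f m := by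
  rw [cofactors, sum_image fun a ha b hb h => ?_, mul_sum, add_comm,
    ← sum_filter_add_sum_filter_not W (q ∣ ·)]
  · refine congrArg (· + _) (sum_congr rfl fun n hn => ?_)
    rw [← hmul, Nat.mul_div_cancel' (mem_filter.1 hn).2]
  · rw [coe_filter] at ha hb
    rw [← Nat.mul_div_cancel' ha.2, ← Nat.mul_div_cancel' hb.2, h]

theorem sum_le_sum_of_subset_nkSet_one (hf : ∀ n, 0 ≤ f n) {R W : Finset ℕ}
    (hW : ↑W ⊆ NkSet ↑R 1) : ∑ n ∈ W, f n ≤ ∑ p ∈ R, f p :=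
  sum_le_sum_of_subset_of_nonneg (fun _ hn => (mem_nkSet_one_iff.1 (hW hn)).2)
    fun n _ _ => hf n

theorem two_mul_sum_le_of_subset_nkSet_two (hmul : ∀ m n, f (m * n) = f m * f n)
    (hf : ∀ n, 0 ≤ f n) {R : Finset ℕ} (hR : ∀ p ∈ R, p.Prime) {W : Finset ℕ}
    (hW : ↑W ⊆ NkSet ↑R 2) :
    2 * ∑ n ∈ W, f n ≤ (∑ p ∈ R, f p) ^ 2 + ∑ p ∈ R, f p ^ 2 := by
  induction R using Finset.induction_on generalizing W with
  | empty =>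
    rw [coe_empty, nkSet_empty_succ, Set.subset_empty_iff, coe_eq_empty] at hW
    simp [hW]
  | @insert q R hqR ih =>
    rw [coe_insert] at hW
    have hq : q.Prime := hR q (mem_insert_self q R)
    have h₀ : 2 * ∑ n ∈ W.filter (¬ q ∣ ·), f n ≤ (∑ p ∈ R, f p) ^ 2 + ∑ p ∈ R, f p ^ 2 :=
      ih (fun p hp => hR p (mem_insert_of_mem hp)) fun n hn =>
        mem_nkSet_of_not_dvd (hW (mem_filter.1 hn).1) (mem_filter.1 hn).2
    have h₁ : ∑ m ∈ cofactors W q, f m ≤ f q + ∑ p ∈ R, f p := by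
      rw [← sum_insert hqR]
      refine sum_le_sum_of_subset_nkSet_one hf fun m hm => ?_
      rw [coe_insert]
      exact mem_nkSet_of_prime_mul_mem hq (hW ((mem_cofactors hq.ne_zero).1 hm))
    rw [sum_eq_sum_filter_add_mul_sum_cofactors hmul W q, sum_insert hqR, sum_insert hqR]
    nlinarith [mul_le_mul_of_nonneg_left h₁ (hf q)]

theorem sum_le_sum_divShadow_of_subset_nkSet_two (hmul : ∀ m n, f (m * n) = f m * f n)
    (hf : ∀ n, 0 ≤ f n) {Q : Finset ℕ}
    (hQ : ∀ R ⊆ Q, (∑ p ∈ R, f p) ^ 2 + ∑ p ∈ R, f p ^ 2 ≤ 2 * ∑ p ∈ R, f p)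
    {W : Finset ℕ} (hW : ↑W ⊆ NkSet ↑Q 2) :
    ∑ n ∈ W, f n ≤ ∑ p ∈ divShadow W, f p := by
  have hshadow : ↑(divShadow W) ⊆ NkSet ↑Q 1 := fun m hm => by
    obtain ⟨n, hn, p, hp, rfl⟩ := mem_divShadow.1 hm
    exact div_mem_nkSet (Nat.prime_of_mem_primeFactors hp) (Nat.dvd_of_mem_primeFactors hp) (hW hn)
  have hprime : ∀ p ∈ divShadow W, p.Prime := fun p hp => (mem_nkSet_one_iff.1 (hshadow hp)).1
  -- the prime factors of an `n ∈ W` are the cofactors `n / r` of its prime factors `r`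
  have hW' : ↑W ⊆ NkSet ↑(divShadow W) 2 := fun n hn => by
    obtain ⟨⟨hn0, -⟩, hΩ⟩ := mem_nkSet_iff.1 (hW hn)
    refine mem_nkSet_iff.2 ⟨⟨hn0, fun p hp hpn => mem_divShadow.2 ⟨n, hn, n / p, ?_, ?_⟩⟩, hΩ⟩
    · have hnp := hprime _ (mem_divShadow.2 ⟨n, hn, p, hp.mem_primeFactors hpn hn0.ne', rfl⟩)
      exact hnp.mem_primeFactors (Nat.div_dvd_of_dvd hpn) hn0.ne'
    · exact Nat.div_div_self hpn hn0.ne'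
  have hR : divShadow W ⊆ Q := fun m hm => (mem_nkSet_one_iff.1 (hshadow hm)).2
  linarith [two_mul_sum_le_of_subset_nkSet_two hmul hf hprime hW', hQ _ hR]

theorem sum_le_sum_divShadow (hmul : ∀ m n, f (m * n) = f m * f n) (hf : ∀ n, 0 ≤ f n)
    {Q : Finset ℕ} (hQp : ∀ p ∈ Q, p.Prime)
    (hQ : ∀ R ⊆ Q, (∑ p ∈ R, f p) ^ 2 + ∑ p ∈ R, f p ^ 2 ≤ 2 * ∑ p ∈ R, f p)
    {k : ℕ} (hk : 1 ≤ k) {W : Finset ℕ} (hW : ↑W ⊆ NkSet ↑Q (k + 1)) :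
    ∑ n ∈ W, f n ≤ ∑ m ∈ divShadow W, f m := by
  induction k, hk using Nat.le_induction generalizing Q W with
  | base => exact sum_le_sum_divShadow_of_subset_nkSet_two hmul hf hQ hW
  | succ k hk ihk =>
    induction Q using Finset.induction_on generalizing W with
    | empty =>
      rw [coe_empty, nkSet_empty_succ, Set.subset_empty_iff, coe_eq_empty] at hW
      simp [hW, divShadow]
    | @insert q Q hqQ ihQ =>
      have hq : q.Prime := hQp q (mem_insert_self q Q)
      rw [coe_insert] at hW
      have h₀ : ∑ n ∈ W.filter (¬ q ∣ ·), f n ≤ ∑ m ∈ (divShadow W).filter (¬ q ∣ ·), f m := by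
        refine (ihQ (fun p hp => hQp p (mem_insert_of_mem hp))
          (fun R hR => hQ R (hR.trans (subset_insert q Q))) fun n hn => ?_).trans
          (sum_le_sum_of_subset_of_nonneg (divShadow_filter_subset W q) fun m _ _ => hf m)
        exact mem_nkSet_of_not_dvd (hW (mem_filter.1 hn).1) (mem_filter.1 hn).2
      have h₁ : ∑ m ∈ cofactors W q, f m ≤ ∑ m ∈ cofactors (divShadow W) q, f m := by
        refine (ihk hQp hQ fun m hm => ?_).trans
          (sum_le_sum_of_subset_of_nonneg (divShadow_cofactors_subset W hq.ne_zero)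
            fun m _ _ => hf m)
        rw [coe_insert]
        exact mem_nkSet_of_prime_mul_mem hq (hW ((mem_cofactors hq.ne_zero).1 hm))
      rw [sum_eq_sum_filter_add_mul_sum_cofactors hmul W q,
        sum_eq_sum_filter_add_mul_sum_cofactors hmul (divShadow W) q]
      exact add_le_add h₀ (mul_le_mul_of_nonneg_left h₁ (hf q))

def levelDivisors (F : Finset ℕ) (k : ℕ) : Finset ℕ :=
  (F.biUnion Nat.divisors).filter (Ω · = k)

theorem mem_levelDivisors {F : Finset ℕ} {k n : ℕ} :
    n ∈ levelDivisors F k ↔ (∃ N ∈ F, n ∣ N ∧ N ≠ 0) ∧ Ω n = k := by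
  simp only [levelDivisors, mem_filter, mem_biUnion, Nat.mem_divisors]

theorem sum_filter_add_sum_levelDivisors_succ_le (hmul : ∀ m n, f (m * n) = f m * f n)
    (hf : ∀ n, 0 ≤ f n) {Q : Finset ℕ} (hQp : ∀ p ∈ Q, p.Prime)
    (hQ : ∀ R ⊆ Q, (∑ p ∈ R, f p) ^ 2 + ∑ p ∈ R, f p ^ 2 ≤ 2 * ∑ p ∈ R, f p)
    {F : Finset ℕ} (hF : ↑F ⊆ NSet ↑Q) (hanti : IsAntichain (· ∣ ·) (F : Set ℕ))
    {k : ℕ} (hk : 1 ≤ k) :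
    ∑ n ∈ F.filter (Ω · = k), f n + ∑ n ∈ levelDivisors F (k + 1), f n ≤
      ∑ n ∈ levelDivisors F k, f n := by
  have hW : ↑(levelDivisors F (k + 1)) ⊆ NkSet ↑Q (k + 1) := fun n hn => by
    obtain ⟨⟨N, hN, hnN, -⟩, hΩ⟩ := mem_levelDivisors.1 hn
    exact mem_nkSet_iff.2 ⟨mem_nSet_of_dvd (hF hN) hnN, hΩ⟩
  have hshadow : divShadow (levelDivisors F (k + 1)) ⊆ levelDivisors F k \ F := fun m hm => by
    obtain ⟨n, hn, p, hp, rfl⟩ := mem_divShadow.1 hm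
    obtain ⟨⟨N, hN, hnN, hN0⟩, hΩ⟩ := mem_levelDivisors.1 hn
    have hpn := Nat.dvd_of_mem_primeFactors hp
    have hΩp : Ω (n / p) = k := (mem_nkSet_iff.1
      (div_mem_nkSet (Nat.prime_of_mem_primeFactors hp) hpn (hW hn))).2
    refine mem_sdiff.2 ⟨mem_levelDivisors.2 ⟨⟨N, hN, (Nat.div_dvd_of_dvd hpn).trans hnN, hN0⟩,
      hΩp⟩, fun hF' => ?_⟩
    -- `n / p ∣ n ∣ N` forces `n / p = N = n`, but the two have different `Ω`
    have hN' : n / p = N := hanti.eq hF' hN ((Nat.div_dvd_of_dvd hpn).trans hnN)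
    have : n = n / p := Nat.dvd_antisymm (hN' ▸ hnN) (Nat.div_dvd_of_dvd hpn)
    rw [← this] at hΩp
    omega
  have hFk : F.filter (Ω · = k) ⊆ levelDivisors F k ∩ F := fun n hn => by
    obtain ⟨hnF, hΩ⟩ := mem_filter.1 hn
    exact mem_inter.2 ⟨mem_levelDivisors.2 ⟨⟨n, hnF, dvd_rfl, (hF hnF).1.ne'⟩, hΩ⟩, hnF⟩
  calc ∑ n ∈ F.filter (Ω · = k), f n + ∑ n ∈ levelDivisors F (k + 1), f n
      ≤ ∑ n ∈ levelDivisors F k ∩ F, f n + ∑ n ∈ levelDivisors F k \ F, f n :=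
        add_le_add (sum_le_sum_of_subset_of_nonneg hFk fun n _ _ => hf n)
          ((sum_le_sum_divShadow hmul hf hQp hQ hk hW).trans
            (sum_le_sum_of_subset_of_nonneg hshadow fun n _ _ => hf n))
    _ = ∑ n ∈ levelDivisors F k, f n := sum_inter_add_sum_sdiff _ _ _

theorem sum_le_sum_primes_of_isAntichain (hmul : ∀ m n, f (m * n) = f m * f n)
    (hf : ∀ n, 0 ≤ f n) {Q : Finset ℕ} (hQp : ∀ p ∈ Q, p.Prime)
    (hQ : ∀ R ⊆ Q, (∑ p ∈ R, f p) ^ 2 + ∑ p ∈ R, f p ^ 2 ≤ 2 * ∑ p ∈ R, f p)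
    {F : Finset ℕ} (hF : ↑F ⊆ NSet ↑Q) (hanti : IsAntichain (· ∣ ·) (F : Set ℕ)) (h1 : 1 ∉ F) :
    ∑ n ∈ F, f n ≤ ∑ p ∈ Q, f p := by
  have htelescope : ∀ k, 1 ≤ k → ∑ j ∈ Ico 1 k, ∑ n ∈ F.filter (Ω · = j), f n +
      ∑ n ∈ levelDivisors F k, f n ≤ ∑ n ∈ levelDivisors F 1, f n := by
    intro k hk
    induction k, hk using Nat.le_induction with
    | base => simp
    | succ k hk ih =>
      rw [sum_Ico_succ_top hk]
      linarith [sum_filter_add_sum_levelDivisors_succ_le hmul hf hQp hQ hF hanti hk]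
  have hlevels : ∑ j ∈ Ico 1 (F.sup Ω + 1), ∑ n ∈ F.filter (Ω · = j), f n = ∑ n ∈ F, f n := by
    refine sum_fiberwise_of_maps_to (fun n hn => mem_Ico.2 ⟨?_, Nat.lt_succ_of_le (le_sup hn)⟩) f
    rw [Nat.one_le_iff_ne_zero, Ne, cardFactors_eq_zero_iff_eq_zero_or_one]
    rintro (rfl | rfl)
    exacts [lt_irrefl 0 (hF hn).1, h1 hn]
  have hprimes : ↑(levelDivisors F 1) ⊆ NkSet ↑Q 1 := fun n hn => by
    obtain ⟨⟨N, hN, hnN, -⟩, hΩ⟩ := mem_levelDivisors.1 hn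
    exact mem_nkSet_iff.2 ⟨mem_nSet_of_dvd (hF hN) hnN, hΩ⟩
  calc ∑ n ∈ F, f n ≤ ∑ n ∈ levelDivisors F 1, f n := by
        linarith [htelescope _ (Nat.le_add_left 1 (F.sup Ω)),
          sum_nonneg fun n (_ : n ∈ levelDivisors F (F.sup Ω + 1)) => hf n]
    _ ≤ ∑ p ∈ Q, f p := sum_le_sum_of_subset_nkSet_one hf hprimes

end Weighted

theorem Primitive.isAntichain {S : Set ℕ} (h : Primitive S) : IsAntichain (· ∣ ·) S :=
  fun a ha b hb hab hdvd => hab (h.2.2 a ha b hb hdvd)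

theorem Primitive.one_notMem {S : Set ℕ} (h : Primitive S) : 1 ∉ S := fun h1 =>
  h.2.1 (Set.eq_singleton_iff_unique_mem.2 ⟨h1, fun b hb => (h.2.2 1 h1 b hb (one_dvd b)).symm⟩)

theorem sum_le_tsum_subtype {ι : Type*} {f : ι → ℝ} (hf : ∀ i, 0 ≤ f i) (hsum : Summable f)
    {s : Set ι} {R : Finset ι} (hR : ↑R ⊆ s) : ∑ i ∈ R, f i ≤ ∑' i : s, f i := by
  classical
  rw [← sum_subtype_of_mem f hR]
  exact (hsum.subtype s).sum_le_tsum _ (fun i _ => hf i)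

theorem sq_add_le_two_mul_of_le_one_add_sqrt_s4 {a b c d : ℝ} (ha : 0 ≤ a) (hba : b ≤ a ^ 2)
    (hac : a ≤ c) (hbd : b ≤ d) (hcd : c ≤ 1 + √(1 - d)) : a ^ 2 + b ≤ 2 * a := by
  rcases le_or_gt a 1 with ha1 | ha1
  · nlinarith
  · have : (a - 1) ^ 2 ≤ 1 - d := (Real.le_sqrt' (by linarith)).1 (by linarith)
    nlinarith

theorem sq_sum_rpow_add_sum_sq_le {t : ℝ} (ht : 1 < t)
    (hineq : ∑' p : {p : ℕ | p.Prime}, (p : ℝ) ^ (-t) ≤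
      1 + Real.sqrt (1 - ∑' p : {p : ℕ | p.Prime}, (p : ℝ) ^ (-(2 * t))))
    {R : Finset ℕ} (hR : ∀ p ∈ R, p.Prime) :
    (∑ p ∈ R, (p : ℝ) ^ (-t)) ^ 2 + ∑ p ∈ R, ((p : ℝ) ^ (-t)) ^ 2 ≤
      2 * ∑ p ∈ R, (p : ℝ) ^ (-t) := by
  have hf : ∀ (s : ℝ) (n : ℕ), 0 ≤ (n : ℝ) ^ s := fun s n => Real.rpow_nonneg n.cast_nonneg s
  have hsq : ∀ n : ℕ, ((n : ℝ) ^ (-t)) ^ 2 = (n : ℝ) ^ (-(2 * t)) := fun n => by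
    rw [← Real.rpow_natCast, ← Real.rpow_mul n.cast_nonneg]
    ring_nf
  refine sq_add_le_two_mul_of_le_one_add_sqrt_s4 (sum_nonneg fun p _ => hf _ p)
    (sum_sq_le_sq_sum_of_nonneg fun p _ => hf _ p)
    (sum_le_tsum_subtype (hf _) (Real.summable_nat_rpow.2 (by linarith)) hR) ?_ hineq
  simp only [hsq]
  exact sum_le_tsum_subtype (hf _) (Real.summable_nat_rpow.2 (by linarith)) hR

theorem sum_rpow_le_tsum_of_isAntichain {t : ℝ} (ht : 1 < t)
    (hineq : ∑' p : {p : ℕ | p.Prime}, (p : ℝ) ^ (-t) ≤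
      1 + Real.sqrt (1 - ∑' p : {p : ℕ | p.Prime}, (p : ℝ) ^ (-(2 * t))))
    {P : Set ℕ} {F : Finset ℕ} (hF : ↑F ⊆ NSet P) (hanti : IsAntichain (· ∣ ·) (F : Set ℕ))
    (h1 : 1 ∉ F) :
    ∑ n ∈ F, (n : ℝ) ^ (-t) ≤ ∑' p : P, (p : ℝ) ^ (-t) := by
  have hmul : ∀ m n : ℕ, ((m * n : ℕ) : ℝ) ^ (-t) = (m : ℝ) ^ (-t) * (n : ℝ) ^ (-t) :=
    fun m n => by rw [Nat.cast_mul, Real.mul_rpow m.cast_nonneg n.cast_nonneg]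
  have hf : ∀ n : ℕ, 0 ≤ (n : ℝ) ^ (-t) := fun n => Real.rpow_nonneg n.cast_nonneg _
  set Q := F.biUnion Nat.primeFactors
  have hQp : ∀ p ∈ Q, p.Prime := fun p hp => by
    obtain ⟨n, -, hpn⟩ := mem_biUnion.1 hp
    exact Nat.prime_of_mem_primeFactors hpn
  have hFQ : ↑F ⊆ NSet ↑Q := fun n hn =>
    ⟨(hF hn).1, fun p hp hpn => mem_biUnion.2 ⟨n, hn, hp.mem_primeFactors hpn (hF hn).1.ne'⟩⟩
  have hQP : ↑Q ⊆ P := fun p hp => by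
    obtain ⟨n, hn, hpn⟩ := mem_biUnion.1 hp
    exact (hF hn).2 p (Nat.prime_of_mem_primeFactors hpn) (Nat.dvd_of_mem_primeFactors hpn)
  calc ∑ n ∈ F, (n : ℝ) ^ (-t) ≤ ∑ p ∈ Q, (p : ℝ) ^ (-t) :=
        sum_le_sum_primes_of_isAntichain hmul hf hQp
          (fun R hR => sq_sum_rpow_add_sum_sq_le ht hineq fun p hp => hQp p (hR hp)) hFQ hanti h1
    _ ≤ ∑' p : P, (p : ℝ) ^ (-t) :=
        sum_le_tsum_subtype hf (Real.summable_nat_rpow.2 (by linarith)) hQP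

theorem every_prime_set_t_best_general (t : ℝ) (ht : 1 < t)
    (hineq : ∑' p : {p : ℕ | p.Prime}, (p : ℝ) ^ (-t) ≤
      1 + Real.sqrt (1 - ∑' p : {p : ℕ | p.Prime}, (p : ℝ) ^ (-(2 * t))))
    (P : Set ℕ)
    (S : Set ℕ) (hS : S ⊆ NSet P) (hprim : Primitive S) :
    ∑' n : S, (n : ℝ) ^ (-t) ≤ ∑' p : P, (p : ℝ) ^ (-t) := by
  have hsum : Summable fun n : ℕ => (n : ℝ) ^ (-t) := Real.summable_nat_rpow.2 (by linarith)
  refine Summable.tsum_le_of_sum_le (hsum.subtype S) fun F => ?_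
  set F' := F.map (Function.Embedding.subtype _)
  have hF'S : ↑F' ⊆ S := fun n hn => by
    obtain ⟨x, -, rfl⟩ := mem_map.1 hn
    exact x.2
  calc ∑ n ∈ F, ((n : ℕ) : ℝ) ^ (-t) = ∑ n ∈ F', (n : ℝ) ^ (-t) := by
        simp only [F', sum_map, Function.Embedding.subtype_apply]
    _ ≤ ∑' p : P, (p : ℝ) ^ (-t) :=
        sum_rpow_le_tsum_of_isAntichain ht hineq (hF'S.trans hS) (hprim.isAntichain.subset hF'S)
          fun h => hprim.one_notMem (hF'S h)

/-- **Corollary 7 (Banks–Martin).** If `t > 1` satisfies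
`∑_{p prime} p^{-t} ≤ 1 + (1 - ∑_{p prime} p^{-2t})^{1/2}`, then every set of primes `P`
is `t`-best among primitive subsets of `ℕ(P)`. -/
theorem every_prime_set_t_best (t : ℝ) (ht : 1 < t)
    (hineq : ∑' p : {p : ℕ | p.Prime}, (p : ℝ) ^ (-t) ≤
      1 + Real.sqrt (1 - ∑' p : {p : ℕ | p.Prime}, (p : ℝ) ^ (-(2 * t))))
    (P : Set ℕ) (hP : ∀ p ∈ P, Nat.Prime p)
    (S : Set ℕ) (hS : S ⊆ NSet P) (hprim : Primitive S) :
    ∑' n : S, (n : ℝ) ^ (-t) ≤ ∑' p : P, (p : ℝ) ^ (-t) :=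
  every_prime_set_t_best_general t ht hineq P S hS hprim
end

section
/- Let m ≥ 1 and let (x₁,…,x_m) be an m-tuple of nonnegative real numbers. If h₁(x₁,…,x_m) ≥ h₂(x₁,…,x_m), then h_k(x₁,…,x_m) ≥ h_{k+1}(x₁,…,x_m) for every natural number k ≥ 1. -/
/-!
Multiplying a nondecreasing `(k + 1)`-tuple `g` of indices by one more index `j` gives a monomial
of degree `k + 2`, which can be redistributed injectively into a nondecreasing `k`-tuple and a
nondecreasing pair: split off `g₀` and `j` when `g₀ ≤ j`, and otherwise put `j` in front and split
off `g₀ ≤ g₁`. For `x ≥ 0` this gives `h_{k+1} h₁ ≤ h_k h₂ ≤ h_k h₁`, and one cancels `h₁`; when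
`h₁ = 0`, the cruder `h_{k+1} ≤ h_k h₁` (split off the head of the tuple) forces `h_{k+1} ≤ 0`.
-/

/-- `hpoly m k x` is the complete homogeneous symmetric polynomial
`h_k(x₁,…,x_m) = ∑_{1 ≤ j₁ ≤ ⋯ ≤ j_k ≤ m} x_{j₁} ⋯ x_{j_k}`, the sum being over all
nondecreasing `k`-tuples of indices (equivalently, all multisets of size `k`). -/
noncomputable def hpoly (m k : ℕ) (x : Fin m → ℝ) : ℝ :=
  ∑ f : {f : Fin k → Fin m // Monotone f}, ∏ i : Fin k, x (f.1 i)

theorem Fin.monotone_cons {α : Type*} [Preorder α] {n : ℕ} {a : α} {f : Fin n → α} :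
    Monotone (Fin.cons a f : Fin (n + 1) → α) ↔ (∀ i, a ≤ f i) ∧ Monotone f := by
  rw [monotone_iff_forall_lt, monotone_iff_forall_lt]
  exact Fin.liftFun_cons (· ≤ ·)

theorem Fintype.sum_comp_le_sum_of_injective {ι κ M : Type*} [Fintype ι] [Fintype κ]
    [AddCommMonoid M] [Preorder M] [AddLeftMono M] {e : ι → κ} (he : Function.Injective e)
    {f : κ → M} (hf : ∀ k, 0 ≤ f k) : ∑ i, f (e i) ≤ ∑ k, f k := by
  classical
  rw [← Finset.sum_image he.injOn]
  exact Finset.sum_le_univ_sum_of_nonneg hf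

abbrev MonotoneTuple (α : Type*) [Preorder α] (k : ℕ) := {f : Fin k → α // Monotone f}

namespace MonotoneTuple

variable {α R : Type*} [CommMonoid R] (x : α → R) {n : ℕ}

section Preorder

variable [Preorder α]

def headTail (g : MonotoneTuple α (n + 1)) : MonotoneTuple α n × α :=
  (⟨Fin.tail g.1, g.2.comp (Fin.strictMono_succ.monotone)⟩, g.1 0)

theorem headTail_injective : Function.Injective (headTail (α := α) (n := n)) := by
  intro g g' h
  simp only [headTail, Prod.mk.injEq, Subtype.ext_iff] at h
  exact Subtype.ext (by rw [← Fin.cons_self_tail g.1, ← Fin.cons_self_tail g'.1, h.1, h.2])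

theorem prod_headTail (g : MonotoneTuple α (n + 1)) :
    (∏ i, x ((headTail g).1.1 i)) * x (headTail g).2 = ∏ i, x (g.1 i) := by
  rw [Fin.prod_univ_succ, mul_comm]
  rfl

end Preorder

section LinearOrder

variable [LinearOrder α]

-- Writing `(f, p)` for the image of `(g, j)`: the first branch gives `p 0 = g 0 ≤ g 1 = f 0`, the
-- second `f 0 = j < g 0 = p 0`, so the two branches have disjoint images.
def exchange : MonotoneTuple α (n + 2) × α → MonotoneTuple α (n + 1) × MonotoneTuple α 2
  | (g, j) =>
    if h : g.1 0 ≤ j then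
      (⟨Fin.tail g.1, g.2.comp Fin.strictMono_succ.monotone⟩, ⟨![g.1 0, j], by simpa using h⟩)
    else
      (⟨Fin.cons j fun i => g.1 i.succ.succ, Fin.monotone_cons.2
        ⟨fun _ => (not_le.1 h).le.trans (g.2 (Fin.zero_le _)),
          g.2.comp (Fin.strictMono_succ.comp Fin.strictMono_succ).monotone⟩⟩,
        ⟨![g.1 0, g.1 1], by simpa using g.2 (Fin.zero_le 1)⟩)

theorem exchange_injective : Function.Injective (exchange (α := α) (n := n)) := by
  rintro ⟨g, j⟩ ⟨g', j'⟩ h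
  have hg := g.2 (Fin.zero_le 1)
  have hg' := g'.2 (Fin.zero_le 1)
  simp only [exchange] at h
  split_ifs at h with hj hj' hj' <;>
    simp only [Prod.ext_iff, Subtype.ext_iff, funext_iff, Fin.tail, Fin.forall_fin_succ,
      Fin.succ_zero_eq_one, Fin.cons_zero, Fin.cons_succ, Matrix.cons_val_zero,
      Matrix.cons_val_succ, Matrix.cons_val_fin_one, forall_const] at h ⊢
  all_goals obtain ⟨⟨h_one, h_succ_succ⟩, h_zero, h_last⟩ := h
  · exact ⟨⟨h_zero, h_one, h_succ_succ⟩, h_last⟩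
  · order
  · order
  · exact ⟨⟨h_zero, h_last, h_succ_succ⟩, h_one⟩

theorem prod_exchange (g : MonotoneTuple α (n + 2)) (j : α) :
    (∏ i, x ((exchange (g, j)).1.1 i)) * ∏ i, x ((exchange (g, j)).2.1 i) =
      (∏ i, x (g.1 i)) * x j := by
  simp only [exchange]
  split_ifs <;> simp only [Fin.prod_univ_succ (n := n + 1), Fin.prod_univ_succ (n := n),
    Fin.prod_univ_two, Fin.cons_zero, Fin.cons_succ, Fin.tail, Matrix.cons_val_zero,
    Matrix.cons_val_one, Fin.succ_zero_eq_one] <;> ac_rfl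

end LinearOrder

end MonotoneTuple

theorem hpoly_nonneg (m k : ℕ) (x : Fin m → ℝ) (hx : ∀ i, 0 ≤ x i) : 0 ≤ hpoly m k x :=
  Finset.sum_nonneg fun _ _ => Finset.prod_nonneg fun _ _ => hx _

theorem hpoly_one (m : ℕ) (x : Fin m → ℝ) : hpoly m 1 x = ∑ j, x j :=
  Fintype.sum_equiv ((Equiv.subtypeUnivEquiv Subsingleton.monotone).trans
    (Equiv.funUnique (Fin 1) (Fin m))) _ _ fun _ => Fin.prod_univ_one _

theorem hpoly_succ_le_mul_hpoly_one (m k : ℕ) (x : Fin m → ℝ) (hx : ∀ i, 0 ≤ x i) :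
    hpoly m (k + 1) x ≤ hpoly m k x * hpoly m 1 x := by
  have key := Fintype.sum_comp_le_sum_of_injective MonotoneTuple.headTail_injective
    (f := fun q : MonotoneTuple (Fin m) k × Fin m => (∏ i, x (q.1.1 i)) * x q.2)
    fun q => mul_nonneg (Finset.prod_nonneg fun _ _ => hx _) (hx _)
  simp only [MonotoneTuple.prod_headTail] at key
  rw [hpoly_one, hpoly, hpoly, Fintype.sum_mul_sum, ← Fintype.sum_prod_type']
  exact key

theorem hpoly_add_two_mul_hpoly_one_le (m n : ℕ) (x : Fin m → ℝ) (hx : ∀ i, 0 ≤ x i) :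
    hpoly m (n + 2) x * hpoly m 1 x ≤ hpoly m (n + 1) x * hpoly m 2 x := by
  have key := Fintype.sum_comp_le_sum_of_injective MonotoneTuple.exchange_injective
    (f := fun q : MonotoneTuple (Fin m) (n + 1) × MonotoneTuple (Fin m) 2 =>
      (∏ i, x (q.1.1 i)) * ∏ i, x (q.2.1 i))
    fun q => mul_nonneg (Finset.prod_nonneg fun _ _ => hx _) (Finset.prod_nonneg fun _ _ => hx _)
  simp only [MonotoneTuple.prod_exchange] at key
  rw [hpoly_one, hpoly, hpoly, hpoly, Fintype.sum_mul_sum, Fintype.sum_mul_sum,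
    ← Fintype.sum_prod_type', ← Fintype.sum_prod_type']
  exact key

theorem hpoly_decreasing_general (m : ℕ) (x : Fin m → ℝ) (hx : ∀ i, 0 ≤ x i)
    (h12 : hpoly m 2 x ≤ hpoly m 1 x) (k : ℕ) (hk : 1 ≤ k) :
    hpoly m (k + 1) x ≤ hpoly m k x := by
  obtain ⟨n, rfl⟩ : ∃ n, k = n + 1 := ⟨k - 1, by omega⟩
  rcases (hpoly_nonneg m 1 x hx).eq_or_lt with h_zero | h_pos
  · calc hpoly m (n + 2) x ≤ hpoly m (n + 1) x * hpoly m 1 x :=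
          hpoly_succ_le_mul_hpoly_one m _ x hx
      _ = 0 := by rw [← h_zero, mul_zero]
      _ ≤ hpoly m (n + 1) x := hpoly_nonneg m _ x hx
  · refine le_of_mul_le_mul_right ?_ h_pos
    calc hpoly m (n + 2) x * hpoly m 1 x ≤ hpoly m (n + 1) x * hpoly m 2 x :=
          hpoly_add_two_mul_hpoly_one_le m n x hx
      _ ≤ hpoly m (n + 1) x * hpoly m 1 x :=
          mul_le_mul_of_nonneg_left h12 (hpoly_nonneg m _ x hx)

/-- **Lemma 10 (Banks–Martin).** If `x₁,…,x_m ≥ 0` and `h₁(x) ≥ h₂(x)`, then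
`h_k(x) ≥ h_{k+1}(x)` for every `k ≥ 1`. -/
theorem hpoly_decreasing (m : ℕ) (hm : 1 ≤ m) (x : Fin m → ℝ) (hx : ∀ i, 0 ≤ x i)
    (h12 : hpoly m 2 x ≤ hpoly m 1 x) (k : ℕ) (hk : 1 ≤ k) :
    hpoly m (k + 1) x ≤ hpoly m k x :=
  hpoly_decreasing_general m x hx h12 k hk
end

section
/- Let t > 1 be a real number and let 𝒫 be a finite set of primes satisfying ∑_{p∈𝒫} p^{−t} ≤ 1 + (1 − ∑_{p∈𝒫} p^{−2t})^{1/2}. Then for every natural number k ≥ 1, ∑_{n∈ℕ_k(𝒫)} n^{−t} ≥ ∑_{n∈ℕ_{k+1}(𝒫)} n^{−t}. -/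
lemma two_mul_sum_sum_filter_le_mul {R ι : Type*} [CommSemiring R] [LinearOrder ι]
    (S : Finset ι) (f : ι → R) :
    2 * ∑ q ∈ S, ∑ r ∈ S with q ≤ r, f q * f r = (∑ q ∈ S, f q) ^ 2 + ∑ q ∈ S, f q ^ 2 := by
  have hsymm :
      ∑ q ∈ S, ∑ r ∈ S with q ≤ r, f q * f r = ∑ q ∈ S, ∑ r ∈ S with r ≤ q, f q * f r := by
    simp only [Finset.sum_filter]
    rw [Finset.sum_comm]
    simp only [mul_comm]
  have hpoint : ∀ q r : ι, ((if q ≤ r then f q * f r else 0) + if r ≤ q then f q * f r else 0)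
      = f q * f r + if q = r then f q * f r else 0 := by
    intro q r
    rcases lt_trichotomy q r with h | rfl | h
    · simp [h.le, h.not_ge, h.ne]
    · simp
    · simp [h.le, h.not_ge, h.ne']
  rw [two_mul]
  nth_rewrite 2 [hsymm]
  simp only [Finset.sum_filter, ← Finset.sum_add_distrib, hpoint]
  simp only [Finset.sum_add_distrib, Finset.sum_ite_eq, ← Finset.sum_mul_sum, sq]
  exact congrArg _ (Finset.sum_congr rfl fun q hq => if_pos hq)

lemma sq_add_le_two_mul_of_le_one_add_sqrt_s9 {u c : ℝ} (hu : 0 ≤ u) (hcu : c ≤ u ^ 2)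
    (h : u ≤ 1 + √(1 - c)) : u ^ 2 + c ≤ 2 * u := by
  rcases le_or_gt u 1 with hu1 | hu1
  · nlinarith
  · have hsqrt : 0 < √(1 - c) := by linarith
    have hc : √(1 - c) ^ 2 = 1 - c := Real.sq_sqrt (Real.sqrt_pos.mp hsqrt).le
    nlinarith [pow_le_pow_left₀ (by linarith : (0 : ℝ) ≤ u - 1)
      (by linarith : u - 1 ≤ √(1 - c)) 2]

/-- `completeTail Q x k p` is the complete homogeneous symmetric polynomial of degree `k` in the
variables `x q` with `q ∈ Q`, `p ≤ q`, computed by splitting off the smallest index of a monomial. -/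
noncomputable def completeTail {R : Type*} [CommSemiring R] (Q : Finset ℕ) (x : ℕ → R) :
    ℕ → ℕ → R
  | 0, _ => 1
  | k + 1, p => ∑ q ∈ Q with p ≤ q, x q * completeTail Q x k q

section CompleteTail

variable {R : Type*} [CommSemiring R] (Q : Finset ℕ) (x : ℕ → R)

lemma completeTail_one (p : ℕ) : completeTail Q x 1 p = ∑ q ∈ Q with p ≤ q, x q := by
  simp [completeTail]

lemma two_mul_completeTail_two (p : ℕ) :
    2 * completeTail Q x 2 p = (∑ q ∈ Q with p ≤ q, x q) ^ 2 + ∑ q ∈ Q with p ≤ q, x q ^ 2 := by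
  rw [← two_mul_sum_sum_filter_le_mul]
  congr 1
  refine Finset.sum_congr rfl fun q hq => ?_
  rw [completeTail_one, Finset.mul_sum, Finset.filter_filter]
  refine Finset.sum_congr (Finset.filter_congr fun r _ => ?_) fun _ _ => rfl
  have hpq := (Finset.mem_filter.mp hq).2
  constructor <;> omega

end CompleteTail

section Inequality

variable {Q : Finset ℕ} {x : ℕ → ℝ} (hx : ∀ q ∈ Q, 0 ≤ x q)
  (h : ∑ q ∈ Q, x q ≤ 1 + √(1 - ∑ q ∈ Q, x q ^ 2))
include hx h

lemma completeTail_two_le_one (p : ℕ) : completeTail Q x 2 p ≤ completeTail Q x 1 p := by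
  have hsub : {q ∈ Q | p ≤ q} ⊆ Q := Finset.filter_subset _ _
  have htail : ∑ q ∈ Q with p ≤ q, x q ≤ 1 + √(1 - ∑ q ∈ Q with p ≤ q, x q ^ 2) :=
    calc ∑ q ∈ Q with p ≤ q, x q
        ≤ ∑ q ∈ Q, x q := Finset.sum_le_sum_of_subset_of_nonneg hsub fun q hq _ => hx q hq
      _ ≤ 1 + √(1 - ∑ q ∈ Q, x q ^ 2) := h
      _ ≤ 1 + √(1 - ∑ q ∈ Q with p ≤ q, x q ^ 2) := by gcongr
  have hsq := sq_add_le_two_mul_of_le_one_add_sqrt_s9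
    (Finset.sum_nonneg fun q hq => hx q (hsub hq))
    (Finset.sum_sq_le_sq_sum_of_nonneg fun q hq => hx q (hsub hq)) htail
  rw [completeTail_one]
  linarith [two_mul_completeTail_two Q x p]

lemma completeTail_succ_le {k : ℕ} (hk : 1 ≤ k) (p : ℕ) :
    completeTail Q x (k + 1) p ≤ completeTail Q x k p := by
  induction k, hk using Nat.le_induction generalizing p with
  | base => exact completeTail_two_le_one hx h p
  | succ k _ ih =>
    exact Finset.sum_le_sum fun q hq =>
      mul_le_mul_of_nonneg_left (ih q) (hx q (Finset.filter_subset _ _ hq))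

end Inequality

def NkSetFrom (P : Set ℕ) (k p : ℕ) : Set ℕ :=
  {n ∈ NkSet P k | ∀ q, q.Prime → q ∣ n → p ≤ q}

lemma NkSetFrom_zero_right (P : Set ℕ) (k : ℕ) : NkSetFrom P k 0 = NkSet P k := by
  simp [NkSetFrom]

lemma NkSetFrom_zero_left (P : Set ℕ) (p : ℕ) : NkSetFrom P 0 p = {1} := by
  ext n
  simp only [NkSetFrom, NkSet, NSet, Set.mem_ofPred_eq, List.length_eq_zero_iff,
    Nat.primeFactorsList_eq_nil, Set.mem_singleton_iff]
  constructor
  · rintro ⟨⟨⟨hn, -⟩, rfl | rfl⟩, -⟩ <;> omega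
  · rintro rfl
    exact ⟨⟨⟨one_pos, fun q hq h => absurd (Nat.dvd_one.mp h) hq.ne_one⟩, Or.inr rfl⟩,
      fun q hq h => absurd (Nat.dvd_one.mp h) hq.ne_one⟩

lemma NkSet_finite (P : Finset ℕ) (k : ℕ) : (NkSet ↑P k).Finite := by
  refine (Set.finite_Iic (P.sup id ^ k)).subset fun n ⟨⟨hn, hnP⟩, hk⟩ => ?_
  have hle := List.prod_le_pow_card n.primeFactorsList (P.sup id) fun q hq =>
    Finset.le_sup (f := id) <|
      hnP q (Nat.prime_of_mem_primeFactorsList hq) (Nat.dvd_of_mem_primeFactorsList hq)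
  rwa [Nat.prod_primeFactorsList hn.ne', hk] at hle

lemma NkSetFrom_finite (P : Finset ℕ) (k p : ℕ) : (NkSetFrom ↑P k p).Finite :=
  (NkSet_finite P k).subset fun _ hn => hn.1

lemma Nat.Prime.eq_or_dvd_of_dvd_mul {q r m : ℕ} (hq : q.Prime) (hr : r.Prime)
    (h : r ∣ q * m) : r = q ∨ r ∣ m :=
  (hr.dvd_mul.mp h).imp_left fun h => (Nat.prime_dvd_prime_iff_eq hr hq).mp h

section MinFac

variable {P : Set ℕ} {k p q m n : ℕ}

lemma mul_mem_NkSetFrom_succ (hqP : q ∈ P) (hq : q.Prime) (hpq : p ≤ q)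
    (hm : m ∈ NkSetFrom P k q) : q * m ∈ NkSetFrom P (k + 1) p := by
  obtain ⟨⟨⟨hm0, hmP⟩, hmk⟩, hmq⟩ := hm
  refine ⟨⟨⟨Nat.mul_pos hq.pos hm0, fun r hr hrd => ?_⟩, ?_⟩, fun r hr hrd => ?_⟩
  · rcases hq.eq_or_dvd_of_dvd_mul hr hrd with rfl | h
    exacts [hqP, hmP r hr h]
  · rw [← ArithmeticFunction.cardFactors_apply, ArithmeticFunction.cardFactors_mul hq.ne_zero
      hm0.ne', ArithmeticFunction.cardFactors_apply_prime hq, ArithmeticFunction.cardFactors_apply,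
      hmk, add_comm]
  · rcases hq.eq_or_dvd_of_dvd_mul hr hrd with rfl | h
    exacts [hpq, hpq.trans (hmq r hr h)]

lemma minFac_mul_of_mem_NkSetFrom (hq : q.Prime) (hm : m ∈ NkSetFrom P k q) :
    (q * m).minFac = q := by
  have hqm : q * m ≠ 1 := fun h => hq.ne_one (Nat.eq_one_of_mul_eq_one_right h)
  refine le_antisymm (Nat.minFac_le_of_dvd hq.two_le (dvd_mul_right q m)) ?_
  rcases hq.eq_or_dvd_of_dvd_mul (Nat.minFac_prime hqm) (Nat.minFac_dvd _) with h | h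
  exacts [h.ge, hm.2 _ (Nat.minFac_prime hqm) h]

lemma minFac_mem_of_mem_NkSetFrom_succ (hn : n ∈ NkSetFrom P (k + 1) p) :
    n.minFac ∈ P ∧ p ≤ n.minFac ∧ n / n.minFac ∈ NkSetFrom P k n.minFac := by
  obtain ⟨⟨⟨hn0, hnP⟩, hnk⟩, hnp⟩ := hn
  have hn1 : n ≠ 1 := by rintro rfl; simp at hnk
  have hq := Nat.minFac_prime hn1
  have hdvd : n / n.minFac ∣ n := Nat.div_dvd_of_dvd (Nat.minFac_dvd n)
  have hm0 : n / n.minFac ≠ 0 := (Nat.pos_of_dvd_of_pos hdvd hn0).ne'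
  refine ⟨hnP _ hq (Nat.minFac_dvd n), hnp _ hq (Nat.minFac_dvd n),
    ⟨⟨Nat.pos_of_ne_zero hm0, fun r hr hrd => hnP r hr (hrd.trans hdvd)⟩, ?_⟩,
    fun r hr hrd => Nat.minFac_le_of_dvd hr.two_le (hrd.trans hdvd)⟩
  have hΩ := ArithmeticFunction.cardFactors_mul hq.ne_zero hm0
  rw [Nat.mul_div_cancel' (Nat.minFac_dvd n), ArithmeticFunction.cardFactors_apply_prime hq,
    ArithmeticFunction.cardFactors_apply, ArithmeticFunction.cardFactors_apply, hnk] at hΩ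
  show (n / n.minFac).primeFactorsList.length = k
  omega

end MinFac

lemma tsum_NkSetFrom_succ {M : Type*} [AddCommMonoid M] [TopologicalSpace M] {P : Finset ℕ}
    (hP : ∀ p ∈ P, p.Prime) (f : ℕ → M) (k p : ℕ) :
    ∑' n : NkSetFrom ↑P (k + 1) p, f n =
      ∑ q ∈ P with p ≤ q, ∑' m : NkSetFrom ↑P k q, f (q * m) := by
  have htsum : ∀ j r (g : ℕ → M),
      ∑' n : NkSetFrom ↑P j r, g n = ∑ n ∈ (NkSetFrom_finite P j r).toFinset, g n := by
    intro j r g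
    rw [← Finset.tsum_subtype', Set.Finite.coe_toFinset]
  rw [htsum, Finset.sum_congr rfl fun q _ => htsum k q (fun m => f (q * m)), Finset.sum_sigma']
  refine Finset.sum_bij' (fun n _ => ⟨n.minFac, n / n.minFac⟩) (fun z _ => z.1 * z.2)
    (fun n hn => ?_) (fun z hz => ?_) (fun n _ => Nat.mul_div_cancel' n.minFac_dvd)
    (fun z hz => ?_) (fun n _ => by rw [Nat.mul_div_cancel' n.minFac_dvd])
  · obtain ⟨hqP, hpq, hm⟩ := minFac_mem_of_mem_NkSetFrom_succ ((Set.Finite.mem_toFinset _).mp hn)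
    simp only [Finset.mem_sigma, Finset.mem_filter, Set.Finite.mem_toFinset]
    exact ⟨⟨hqP, hpq⟩, hm⟩
  · simp only [Finset.mem_sigma, Finset.mem_filter, Set.Finite.mem_toFinset] at hz ⊢
    exact mul_mem_NkSetFrom_succ hz.1.1 (hP _ hz.1.1) hz.1.2 hz.2
  · simp only [Finset.mem_sigma, Finset.mem_filter, Set.Finite.mem_toFinset] at hz
    rw [minFac_mul_of_mem_NkSetFrom (hP _ hz.1.1) hz.2,
      Nat.mul_div_cancel_left _ (hP _ hz.1.1).pos]

lemma tsum_NkSetFrom_rpow {P : Finset ℕ} (hP : ∀ p ∈ P, p.Prime) (s : ℝ) (k p : ℕ) :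
    ∑' n : NkSetFrom ↑P k p, (n : ℝ) ^ s = completeTail P (fun q => (q : ℝ) ^ s) k p := by
  induction k generalizing p with
  | zero =>
    rw [NkSetFrom_zero_left, tsum_singleton 1 (fun n : ℕ => (n : ℝ) ^ s), completeTail,
      Nat.cast_one, Real.one_rpow]
  | succ k ih =>
    rw [tsum_NkSetFrom_succ hP (fun n : ℕ => (n : ℝ) ^ s), completeTail]
    refine Finset.sum_congr rfl fun q _ => ?_
    simp only [Nat.cast_mul, Real.mul_rpow (Nat.cast_nonneg _) (Nat.cast_nonneg _)]
    rw [tsum_mul_left, ih]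

theorem Nk_sums_decreasing_general (t : ℝ) (P : Finset ℕ)
    (hP : ∀ p ∈ P, Nat.Prime p)
    (hineq : ∑ p ∈ P, (p : ℝ) ^ (-t) ≤
      1 + Real.sqrt (1 - ∑ p ∈ P, (p : ℝ) ^ (-(2 * t))))
    (k : ℕ) (hk : 1 ≤ k) :
    ∑' n : NkSet ↑P (k + 1), (n : ℝ) ^ (-t) ≤ ∑' n : NkSet ↑P k, (n : ℝ) ^ (-t) := by
  have hsq : ∀ p : ℕ, (p : ℝ) ^ (-(2 * t)) = ((p : ℝ) ^ (-t)) ^ 2 := fun p => by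
    rw [← Real.rpow_natCast, ← Real.rpow_mul (Nat.cast_nonneg p)]
    ring_nf
  simp only [hsq] at hineq
  rw [← NkSetFrom_zero_right, ← NkSetFrom_zero_right, tsum_NkSetFrom_rpow hP,
    tsum_NkSetFrom_rpow hP]
  exact completeTail_succ_le (fun p _ => by positivity) hineq hk 0

/-- Part (ii) of Proposition 12 (Banks–Martin): if `t > 1` and `P` is a finite set of
primes with `∑_{p∈P} p^{-t} ≤ 1 + (1 - ∑_{p∈P} p^{-2t})^{1/2}`, then
`∑_{n∈ℕ_k(P)} n^{-t} ≥ ∑_{n∈ℕ_{k+1}(P)} n^{-t}` for every `k ≥ 1`. -/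
theorem Nk_sums_decreasing (t : ℝ) (ht : 1 < t) (P : Finset ℕ)
    (hP : ∀ p ∈ P, Nat.Prime p)
    (hineq : ∑ p ∈ P, (p : ℝ) ^ (-t) ≤
      1 + Real.sqrt (1 - ∑ p ∈ P, (p : ℝ) ^ (-(2 * t))))
    (k : ℕ) (hk : 1 ≤ k) :
    ∑' n : NkSet ↑P (k + 1), (n : ℝ) ^ (-t) ≤ ∑' n : NkSet ↑P k, (n : ℝ) ^ (-t) :=
  Nk_sums_decreasing_general t P hP hineq k hk
end

section
/- For every real number t > 1, ∑_{p prime} p^{−t} = ∑_{m=1}^∞ (μ(m)/m) · log ζ(tm), where μ is the Möbius function and ζ is the Riemann zeta function. In particular, ∑_{p prime} p⁻² = ∑_{m=1}^∞ (μ(m)/m) · log ζ(2m) < 1. -/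
/-!
Taking logarithms in the Euler product gives `log ζ(s) = ∑_p -log (1 - p^{-s})` for `s > 1`.
For `|x| < 1` Möbius inversion gives `∑_m μ(m)/m · (-log (1 - x^m)) = x`: expanding the
logarithm, the double series `∑_{m,k} μ(m)/(mk) · x^{mk}` converges absolutely, and its terms with
`mk = n` add up to `x^n/n · ∑_{m ∣ n} μ(m)`, which vanishes unless `n = 1`. Taking `x = p^{-t}` and
interchanging the absolutely convergent sums over `m` and `p` yields the identity. Finally
`∑_p p^{-2} ≤ ∑_{n ≥ 2} n^{-2} = π²/6 - 1 < 1`.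
-/

open ArithmeticFunction Real
open scoped ArithmeticFunction.Moebius

lemma HasSum.prod_symm {α β γ : Type*} [AddCommMonoid α] [TopologicalSpace α]
    {f : β × γ → α} {a : α} (hf : HasSum f a) : HasSum (fun p : γ × β => f p.swap) a :=
  (Equiv.prodComm γ β).hasSum_iff.mpr hf

lemma norm_moebius_div_mul_pow_le {x : ℝ} (hx : |x| ≤ 1) (m k : ℕ) :
    ‖(μ m : ℝ) / (m * k) * x ^ (m * k)‖ ≤ √|x| ^ m * √|x| ^ k := by
  rcases Nat.eq_zero_or_pos m with rfl | hm
  · simp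
  rcases Nat.eq_zero_or_pos k with rfl | hk
  · simp
  have hcoeff : |(μ m : ℝ)| / (m * k) ≤ 1 := by
    rw [div_le_one (by positivity)]
    calc |(μ m : ℝ)| ≤ 1 := mod_cast abs_moebius_le_one
      _ ≤ m * k := mod_cast Nat.one_le_iff_ne_zero.mpr (by positivity)
  have hexp : m + k ≤ 2 * (m * k) := by nlinarith
  calc ‖(μ m : ℝ) / (m * k) * x ^ (m * k)‖ = |(μ m : ℝ)| / (m * k) * √|x| ^ (2 * (m * k)) := by
        rw [pow_mul (√|x|) 2, sq_sqrt (abs_nonneg x)]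
        simp
    _ ≤ 1 * √|x| ^ (m + k) :=
        mul_le_mul hcoeff (pow_le_pow_of_le_one (by positivity) (sqrt_le_one.mpr hx) hexp)
          (by positivity) zero_le_one
    _ = √|x| ^ m * √|x| ^ k := by rw [one_mul, pow_add]

lemma summable_moebius_div_mul_pow {x : ℝ} (hx : |x| < 1) :
    Summable fun mk : ℕ × ℕ => (μ mk.1 : ℝ) / (mk.1 * mk.2) * x ^ (mk.1 * mk.2) := by
  have hgeom : Summable fun n : ℕ => √|x| ^ n :=
    summable_geometric_of_lt_one (by positivity) ((sqrt_lt' one_pos).mpr (by simpa using hx))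
  exact .of_norm_bounded (hgeom.mul_of_nonneg hgeom (fun _ => by positivity)
    (fun _ => by positivity)) fun mk => norm_moebius_div_mul_pow_le hx.le mk.1 mk.2

lemma sum_divisorsAntidiagonal_moebius {R : Type*} [Ring R] (n : ℕ) :
    ∑ mk ∈ n.divisorsAntidiagonal, (μ mk.1 : R) = if n = 1 then 1 else 0 := by
  rw [← one_apply, ← coe_moebius_mul_coe_zeta, mul_apply]
  refine Finset.sum_congr rfl fun mk hmk => ?_
  have hk := Nat.pos_of_mem_divisors (Nat.snd_mem_divisors_of_mem_antidiagonal hmk)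
  simp [intCoe_apply, hk.ne']

lemma tsum_mul_preimage_eq_sum_divisorsAntidiagonal {M : Type*} [AddCommMonoid M]
    [TopologicalSpace M] {f : ℕ × ℕ → M} (hf : ∀ mk : ℕ × ℕ, mk.1 * mk.2 = 0 → f mk = 0)
    (n : ℕ) :
    ∑' mk : (fun mk : ℕ × ℕ => mk.1 * mk.2) ⁻¹' {n}, f mk =
      ∑ mk ∈ n.divisorsAntidiagonal, f mk := by
  rcases eq_or_ne n 0 with rfl | hn
  · simp [tsum_congr fun mk : (fun mk : ℕ × ℕ => mk.1 * mk.2) ⁻¹' {0} => hf mk mk.2]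
  · have hfiber : (fun mk : ℕ × ℕ => mk.1 * mk.2) ⁻¹' {n} = n.divisorsAntidiagonal := by
      ext; simp [hn]
    rw [hfiber, Finset.tsum_subtype']

-- The terms with `m = 0` or `k = 0` vanish because `(0 : ℝ)⁻¹ = 0`.
lemma hasSum_moebius_div_mul_pow {x : ℝ} (hx : |x| < 1) :
    HasSum (fun mk : ℕ × ℕ => (μ mk.1 : ℝ) / (mk.1 * mk.2) * x ^ (mk.1 * mk.2)) x := by
  set f := fun mk : ℕ × ℕ => (μ mk.1 : ℝ) / (mk.1 * mk.2) * x ^ (mk.1 * mk.2) with hf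
  have hfiber (n : ℕ) : ∑' mk : (fun mk : ℕ × ℕ => mk.1 * mk.2) ⁻¹' {n}, f mk =
      if n = 1 then x else 0 := by
    have hterm : ∀ mk ∈ n.divisorsAntidiagonal, f mk = μ mk.1 * (x ^ n / n) := by
      intro mk hmk
      obtain ⟨rfl, -⟩ := Nat.mem_divisorsAntidiagonal.mp hmk
      simp only [hf, Nat.cast_mul]
      ring
    rw [tsum_mul_preimage_eq_sum_divisorsAntidiagonal (fun mk h => by simp [hf, ← Nat.cast_mul, h]),
      Finset.sum_congr rfl hterm, ← Finset.sum_mul, sum_divisorsAntidiagonal_moebius]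
    split_ifs with hn <;> simp [hn]
  have hS : HasSum f (∑' mk, f mk) := (summable_moebius_div_mul_pow hx).hasSum
  have hfibers := hS.tsum_fiberwise fun mk => mk.1 * mk.2
  simp only [hfiber] at hfibers
  rwa [hfibers.unique (hasSum_ite_eq 1 x)] at hS

lemma hasSum_pow_div_neg_log_one_sub {y : ℝ} (hy : |y| < 1) :
    HasSum (fun k : ℕ => y ^ k / k) (-log (1 - y)) := by
  rw [← hasSum_nat_add_iff' 1]
  simpa using hasSum_pow_div_log_of_abs_lt_one hy

lemma hasSum_moebius_div_mul_neg_log_one_sub_pow {x : ℝ} (hx : |x| < 1) :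
    HasSum (fun m : ℕ => (μ m : ℝ) / m * -log (1 - x ^ m)) x := by
  refine (hasSum_moebius_div_mul_pow hx).prod_fiberwise fun m => ?_
  rcases Nat.eq_zero_or_pos m with rfl | hm
  · simp [hasSum_zero]
  have hxm : |x ^ m| < 1 := by
    rw [abs_pow]; exact pow_lt_one₀ (abs_nonneg x) hx hm.ne'
  have hterm : (fun k : ℕ => (μ m : ℝ) / (m * k) * x ^ (m * k)) =
      fun k : ℕ => (μ m : ℝ) / m * ((x ^ m) ^ k / k) := by
    ext k
    rw [pow_mul, div_mul_div_comm, div_mul_eq_mul_div]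
  exact hterm ▸ (hasSum_pow_div_neg_log_one_sub hxm).mul_left _

lemma neg_log_one_sub_le_two_mul {y : ℝ} (hy₀ : 0 ≤ y) (hy : y ≤ 1 / 2) :
    -log (1 - y) ≤ 2 * y := by
  have h₁ : 0 < 1 - y := by linarith
  calc -log (1 - y) = log (1 - y)⁻¹ := (log_inv _).symm
    _ ≤ (1 - y)⁻¹ - 1 := log_le_sub_one_of_pos (inv_pos.mpr h₁)
    _ = y / (1 - y) := by field_simp; ring
    _ ≤ 2 * y := by rw [div_le_iff₀ h₁]; nlinarith

lemma abs_moebius_div_mul_neg_log_one_sub_pow_le {x : ℝ} (hx₀ : 0 ≤ x) (hx : x ≤ 1 / 2)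
    (m : ℕ) : |(μ m : ℝ) / m * -log (1 - x ^ m)| ≤ (1 / 2) ^ m * (4 * x) := by
  rcases Nat.eq_zero_or_pos m with rfl | hm
  · simp [hx₀]
  have hxm₀ : 0 ≤ x ^ m := pow_nonneg hx₀ m
  have hxm : x ^ m ≤ 1 / 2 := (pow_le_of_le_one hx₀ (by linarith) hm.ne').trans hx
  have hpow : x ^ m ≤ (1 / 2) ^ m * (2 * x) := by
    obtain ⟨n, rfl⟩ := Nat.exists_eq_add_of_lt hm
    rw [zero_add, pow_succ, pow_succ]
    nlinarith [pow_le_pow_left₀ hx₀ hx n, pow_nonneg hx₀ n]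
  have hcoeff : |(μ m : ℝ) / m| ≤ 1 := by
    rw [abs_div, Nat.abs_cast, div_le_one (by positivity)]
    calc |(μ m : ℝ)| ≤ 1 := mod_cast abs_moebius_le_one
      _ ≤ m := mod_cast hm
  have hlog : 0 ≤ -log (1 - x ^ m) := neg_nonneg.mpr (log_nonpos (by linarith) (by linarith))
  calc |(μ m : ℝ) / m * -log (1 - x ^ m)| ≤ 1 * (2 * x ^ m) := by
        rw [abs_mul, abs_of_nonneg hlog]
        exact mul_le_mul hcoeff (neg_log_one_sub_le_two_mul hxm₀ hxm) hlog zero_le_one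
    _ ≤ (1 / 2) ^ m * (4 * x) := by linarith

lemma Nat.Prime.rpow_neg_le_half {p : ℕ} (hp : p.Prime) {s : ℝ} (hs : 1 ≤ s) :
    (p : ℝ) ^ (-s) ≤ 1 / 2 := by
  have hp2 : (2 : ℝ) ≤ p := mod_cast hp.two_le
  calc (p : ℝ) ^ (-s) ≤ (p : ℝ) ^ (-1 : ℝ) :=
        rpow_le_rpow_of_exponent_le (by linarith) (by linarith)
    _ ≤ 1 / 2 := by rw [rpow_neg_one, one_div]; exact inv_anti₀ two_pos hp2

lemma hasSum_neg_log_one_sub_prime_rpow_neg {s : ℝ} (hs : 1 < s) :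
    HasSum (fun p : Nat.Primes => -log (1 - (p : ℝ) ^ (-s))) (log (riemannZeta s).re) := by
  have hcpow (p : Nat.Primes) : (((p : ℝ) ^ (-s) : ℝ) : ℂ) = (p : ℂ) ^ (-(s : ℂ)) := by
    rw [Complex.ofReal_cpow (Nat.cast_nonneg _)]
    push_cast
    rfl
  have hofReal (p : Nat.Primes) : ((-log (1 - (p : ℝ) ^ (-s)) : ℝ) : ℂ) =
      -Complex.log (1 - (p : ℂ) ^ (-(s : ℂ))) := by
    have h := p.2.rpow_neg_le_half hs.le
    rw [Complex.ofReal_neg, Complex.ofReal_log (by linarith), Complex.ofReal_sub, hcpow,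
      Complex.ofReal_one]
  have hsummable : Summable fun p : Nat.Primes => -log (1 - (p : ℝ) ^ (-s)) := by
    rw [← Complex.summable_ofReal]
    simp only [hofReal, ← hcpow]
    exact (Complex.summable_ofReal.mpr
      (Nat.Primes.summable_rpow.mpr (by linarith))).clog_one_sub.neg
  have hzeta := riemannZeta_eulerProduct_exp_log (s := s) (by simpa using hs)
  simp only [← hofReal, ← Complex.ofReal_tsum, ← Complex.ofReal_exp] at hzeta
  rw [← hzeta, Complex.ofReal_re, log_exp]
  exact hsummable.hasSum

lemma hasSum_neg_log_one_sub_prime_rpow_neg_pow {t : ℝ} (ht : 1 < t) {m : ℕ} (hm : 0 < m) :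
    HasSum (fun p : Nat.Primes => -log (1 - ((p : ℝ) ^ (-t)) ^ m))
      (log (riemannZeta (t * m)).re) := by
  have htm : 1 < t * m := one_lt_mul_of_lt_of_le ht (mod_cast hm)
  have hpow (p : Nat.Primes) : ((p : ℝ) ^ (-t)) ^ m = (p : ℝ) ^ (-(t * m)) := by
    rw [← rpow_natCast, ← rpow_mul (Nat.cast_nonneg _), neg_mul]
  simpa [hpow] using hasSum_neg_log_one_sub_prime_rpow_neg htm

lemma summable_moebius_div_mul_neg_log_one_sub_prime_rpow_neg {t : ℝ} (ht : 1 < t) :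
    Summable fun mp : ℕ × Nat.Primes =>
      (μ mp.1 : ℝ) / mp.1 * -log (1 - ((mp.2 : ℝ) ^ (-t)) ^ mp.1) := by
  have hprimes : Summable fun p : Nat.Primes => 4 * (p : ℝ) ^ (-t) :=
    (Nat.Primes.summable_rpow.mpr (by linarith)).mul_left 4
  have hbound : Summable fun mp : ℕ × Nat.Primes => (1 / 2 : ℝ) ^ mp.1 * (4 * (mp.2 : ℝ) ^ (-t)) :=
    Summable.mul_of_nonneg (f := fun m : ℕ => (1 / 2 : ℝ) ^ m)
      (g := fun p : Nat.Primes => 4 * (p : ℝ) ^ (-t)) summable_geometric_two hprimes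
      (fun _ => by positivity) (fun _ => by positivity)
  exact hbound.of_norm_bounded fun mp => abs_moebius_div_mul_neg_log_one_sub_pow_le
    (by positivity) (mp.2.2.rpow_neg_le_half ht.le) mp.1

theorem tsum_prime_rpow_neg_eq_tsum_moebius_div_mul_log_riemannZeta {t : ℝ} (ht : 1 < t) :
    ∑' p : Nat.Primes, (p : ℝ) ^ (-t) =
      ∑' m : ℕ, (μ m : ℝ) / m * log (riemannZeta (t * m)).re := by
  obtain ⟨S, hS⟩ := summable_moebius_div_mul_neg_log_one_sub_prime_rpow_neg ht
  have hrow (m : ℕ) : HasSum (fun p : Nat.Primes => (μ m : ℝ) / m * -log (1 - ((p : ℝ) ^ (-t)) ^ m))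
      ((μ m : ℝ) / m * log (riemannZeta (t * m)).re) := by
    rcases Nat.eq_zero_or_pos m with rfl | hm
    · simp [hasSum_zero]
    · exact (hasSum_neg_log_one_sub_prime_rpow_neg_pow ht hm).mul_left _
  have hrows := hS.prod_fiberwise hrow
  have hfiber (p : Nat.Primes) : HasSum (fun m : ℕ =>
      (μ m : ℝ) / m * -log (1 - ((p : ℝ) ^ (-t)) ^ m)) ((p : ℝ) ^ (-t)) := by
    refine hasSum_moebius_div_mul_neg_log_one_sub_pow (x := (p : ℝ) ^ (-t)) ?_
    rw [abs_of_nonneg (by positivity)]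
    linarith [p.2.rpow_neg_le_half ht.le]
  have hcols := hS.prod_symm.prod_fiberwise hfiber
  exact hcols.tsum_eq.trans hrows.tsum_eq.symm

lemma tsum_prime_one_div_sq_lt_one : ∑' p : Nat.Primes, 1 / (p : ℝ) ^ 2 < 1 := by
  have hsum := hasSum_zeta_two
  have hsplit := Summable.tsum_add_tsum_compl (s := {p : ℕ | p.Prime})
    (hsum.summable.subtype _) (hsum.summable.subtype _)
  have hone : 1 ≤ ∑' n : ({p : ℕ | p.Prime}ᶜ : Set ℕ), 1 / (n : ℝ) ^ 2 := by
    simpa using (hsum.summable.subtype _).le_tsum ⟨1, Nat.not_prime_one⟩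
      fun _ _ => one_div_nonneg.mpr (sq_nonneg _)
  rw [hsum.tsum_eq] at hsplit
  have hpi : π ^ 2 < 12 := by nlinarith [pi_lt_d2, pi_pos]
  change ∑' p : {p : ℕ | p.Prime}, 1 / (p : ℝ) ^ 2 < 1
  linarith

/-- Equations (4) and (11) of Banks–Martin: for every real `t > 1`,
`∑_{p prime} p^{-t} = ∑_{m=1}^∞ (μ(m)/m) log ζ(tm)` (where `μ` is the Möbius function
and `ζ` is the Riemann zeta function; the `m = 0` term of the `tsum` vanishes since
`μ(0) = 0`); in particular `∑_{p prime} p⁻² = ∑_{m=1}^∞ (μ(m)/m) log ζ(2m) < 1`. -/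
theorem prime_sum_moebius_zeta :
    (∀ t : ℝ, 1 < t →
      ∑' p : {p : ℕ | p.Prime}, (p : ℝ) ^ (-t) =
        ∑' m : ℕ, ((ArithmeticFunction.moebius m : ℝ) / (m : ℝ)) *
          Real.log (riemannZeta (t * (m : ℂ))).re) ∧
    (∑' p : {p : ℕ | p.Prime}, 1 / ((p : ℝ) ^ 2) =
      ∑' m : ℕ, ((ArithmeticFunction.moebius m : ℝ) / (m : ℝ)) *
        Real.log (riemannZeta (2 * (m : ℂ))).re) ∧
    ∑' p : {p : ℕ | p.Prime}, 1 / ((p : ℝ) ^ 2) < 1 := by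
  have hmain (t : ℝ) (ht : 1 < t) := tsum_prime_rpow_neg_eq_tsum_moebius_div_mul_log_riemannZeta ht
  have hsq : ∑' p : Nat.Primes, 1 / (p : ℝ) ^ 2 = ∑' p : Nat.Primes, (p : ℝ) ^ (-2 : ℝ) :=
    tsum_congr fun p => by rw [rpow_neg (Nat.cast_nonneg _), rpow_two, one_div]
  refine ⟨hmain, ?_, tsum_prime_one_div_sq_lt_one⟩
  exact hsq.trans (by simpa using hmain 2 one_lt_two)
end

section
/- Let 𝒫 be a set of primes such that ∑_{p∈𝒫} p⁻¹ diverges. Then there exists a real number δ > 0 such that for every real t with 1 < t < 1 + δ, we have ∑_{p∈𝒫} p^{−t} < ∑_{n∈ℕ₂(𝒫)} n^{−t}. -/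
/-- The product of two primes of `P` lies in `ℕ₂(P)`. -/
lemma mul_mem_N2 {P : Set ℕ} (hP : ∀ p ∈ P, Nat.Prime p) {p q : ℕ}
    (hp : p ∈ P) (hq : q ∈ P) : p * q ∈ NkSet P 2 := by
  have hpp := hP p hp
  have hqp := hP q hq
  refine ⟨⟨Nat.mul_pos hpp.pos hqp.pos, fun r hr hrdvd => ?_⟩, ?_⟩
  · rcases (Nat.Prime.dvd_mul hr).1 hrdvd with h | h
    · rwa [(Nat.prime_dvd_prime_iff_eq hr hpp).1 h]
    · rwa [(Nat.prime_dvd_prime_iff_eq hr hqp).1 h]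
  · have hperm := Nat.perm_primeFactorsList_mul hpp.pos.ne' hqp.pos.ne'
    rw [hperm.length_eq, List.length_append, Nat.primeFactorsList_prime hpp,
      Nat.primeFactorsList_prime hqp]
    rfl

/-- Unique factorization for products of two primes, ordered form. -/
lemma prime_pair_eq {p q p' q' : ℕ} (hp : p.Prime) (hq : q.Prime) (hp' : p'.Prime)
    (hq' : q'.Prime) (h : p * q = p' * q') (hle : p ≤ q) (hle' : p' ≤ q') :
    p = p' ∧ q = q' := by
  have hdvd : p ∣ p' * q' := h ▸ Dvd.intro q rfl
  rcases (Nat.Prime.dvd_mul hp).1 hdvd with hd | hd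
  · have hpp' : p = p' := (Nat.prime_dvd_prime_iff_eq hp hp').1 hd
    subst hpp'
    exact ⟨rfl, Nat.eq_of_mul_eq_mul_left hp.pos h⟩
  · have hpq' : p = q' := (Nat.prime_dvd_prime_iff_eq hp hq').1 hd
    subst hpq'
    have hq'' : q = p' := by
      have : q * p = p' * p := by rw [mul_comm q p, h, mul_comm p' p]
      exact Nat.eq_of_mul_eq_mul_right hp.pos this
    subst hq''
    omega

/-- Remark after Corollary 7 (Banks–Martin): if the sum of the reciprocals of the
elements of a set of primes `P` diverges, then there is `δ > 0` such that
`∑_{p∈P} p^{-t} < ∑_{n∈ℕ₂(P)} n^{-t}` for all `1 < t < 1 + δ`. -/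
theorem divergent_recips_N2_bigger (P : Set ℕ) (hP : ∀ p ∈ P, Nat.Prime p)
    (hdiv : ¬ Summable fun p : P => (1 : ℝ) / (p : ℝ)) :
    ∃ δ : ℝ, 0 < δ ∧ ∀ t : ℝ, 1 < t → t < 1 + δ →
      ∑' p : P, (p : ℝ) ^ (-t) < ∑' n : NkSet P 2, (n : ℝ) ^ (-t) := by
  -- Notation
  have hp2 : ∀ p : P, (2 : ℝ) ≤ (p : ℝ) := fun p => by
    exact_mod_cast (hP p p.2).two_le
  have hppos : ∀ p : P, (0 : ℝ) < (p : ℝ) := fun p => lt_of_lt_of_le two_pos (hp2 p)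
  -- summability of the prime sums for t > 1
  have hsum : ∀ t : ℝ, 1 < t → Summable fun p : P => (p : ℝ) ^ (-t) := by
    intro t ht
    exact (Real.summable_nat_rpow.mpr (by linarith : -t < -1)).subtype _
  have hsumN2 : ∀ t : ℝ, 1 < t → Summable fun n : NkSet P 2 => (n : ℝ) ^ (-t) := by
    intro t ht
    exact (Real.summable_nat_rpow.mpr (by linarith : -t < -1)).subtype _
  have hnonneg : ∀ t : ℝ, ∀ p : P, (0 : ℝ) ≤ (p : ℝ) ^ (-t) := fun t p =>
    Real.rpow_nonneg (hppos p).le _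
  -- There exists t₀ > 1 with ∑' p, p^{-t₀} > 2
  have hbig : ∃ t₀ : ℝ, 1 < t₀ ∧ 2 < ∑' p : P, (p : ℝ) ^ (-t₀) := by
    by_contra hcon
    push_neg at hcon
    apply hdiv
    apply summable_of_sum_le (c := 2) (fun p => by positivity)
    intro u
    -- ∑_{p ∈ u} 1/p ≤ 2 by letting t → 1⁺
    have hlim : Filter.Tendsto (fun t : ℝ => ∑ p ∈ u, (p : ℝ) ^ (-t))
        (nhdsWithin 1 (Set.Ioi 1)) (nhds (∑ p ∈ u, (p : ℝ) ^ (-(1:ℝ)))) := by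
      apply Filter.Tendsto.mono_left _ nhdsWithin_le_nhds
      apply tendsto_finset_sum
      intro p _
      have hc : ContinuousAt (fun t : ℝ => (p : ℝ) ^ (-t)) 1 := by
        exact (Real.continuousAt_const_rpow (hppos p).ne').comp (continuousAt_id.neg)
      exact hc
    have hle : ∀ᶠ t in nhdsWithin (1:ℝ) (Set.Ioi 1),
        ∑ p ∈ u, (p : ℝ) ^ (-t) ≤ 2 := by
      filter_upwards [self_mem_nhdsWithin] with t ht
      have ht1 : 1 < t := ht
      calc ∑ p ∈ u, (p : ℝ) ^ (-t) ≤ ∑' p : P, (p : ℝ) ^ (-t) :=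
            Summable.sum_le_tsum u (fun p _ => hnonneg t p) (hsum t ht1)
        _ ≤ 2 := hcon t ht1
    have h2 : ∑ p ∈ u, (p : ℝ) ^ (-(1:ℝ)) ≤ 2 :=
      le_of_tendsto hlim hle
    calc ∑ p ∈ u, 1 / (p : ℝ) = ∑ p ∈ u, (p : ℝ) ^ (-(1:ℝ)) := by
          apply Finset.sum_congr rfl
          intro p _
          rw [Real.rpow_neg_one, one_div]
      _ ≤ 2 := h2
  obtain ⟨t₀, ht₀1, ht₀2⟩ := hbig
  refine ⟨t₀ - 1, by linarith, fun t ht1 ht2 => ?_⟩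
  have htt₀ : t ≤ t₀ := by linarith
  set S : ℝ := ∑' p : P, (p : ℝ) ^ (-t) with hS
  set T : ℝ := ∑' n : NkSet P 2, (n : ℝ) ^ (-t) with hT
  -- monotonicity: S ≥ ∑' p, p^{-t₀} > 2
  have hS2 : 2 < S := by
    refine lt_of_lt_of_le ht₀2 (Summable.tsum_le_tsum (fun p => ?_) (hsum t₀ ht₀1) (hsum t ht1))
    exact Real.rpow_le_rpow_of_exponent_le (le_trans one_le_two (hp2 p)) (by linarith)
  -- the key inequality: S^2 ≤ 2T
  have hprod : Summable fun z : P × P => (z.1 : ℝ) ^ (-t) * (z.2 : ℝ) ^ (-t) :=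
    (hsum t ht1).mul_of_nonneg (hsum t ht1) (fun p => hnonneg t p) (fun p => hnonneg t p)
  have hmul : S * S = ∑' z : P × P, (z.1 : ℝ) ^ (-t) * (z.2 : ℝ) ^ (-t) :=
    Summable.tsum_mul_tsum (hsum t ht1) (hsum t ht1) hprod
  -- injection into N₂(P) × Bool
  set e : P × P → (NkSet P 2) × Bool := fun z =>
    (⟨(z.1 : ℕ) * (z.2 : ℕ), mul_mem_N2 hP z.1.2 z.2.2⟩, decide ((z.1 : ℕ) ≤ (z.2 : ℕ)))
    with he
  have heinj : Function.Injective e := by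
    rintro ⟨p, q⟩ ⟨p', q'⟩ hz
    have h1 : (p : ℕ) * q = (p' : ℕ) * q' := congrArg (fun w => (w.1 : ℕ)) hz
    have h2 : ((p : ℕ) ≤ q) ↔ ((p' : ℕ) ≤ q') := by
      have := congrArg Prod.snd hz
      simpa [he] using decide_eq_decide.mp this
    have hpp := hP p p.2
    have hqp := hP q q.2
    have hpp' := hP p' p'.2
    have hqp' := hP q' q'.2
    by_cases hle : (p : ℕ) ≤ q
    · obtain ⟨e1, e2⟩ := prime_pair_eq hpp hqp hpp' hqp' h1 hle (h2.mp hle)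
      ext <;> simp [e1, e2]
    · have hle' : (q : ℕ) ≤ p := le_of_not_ge hle
      have hle'' : (q' : ℕ) ≤ p' := by
        by_contra hcon
        exact hle (h2.mpr (le_of_not_ge hcon))
      have h1' : (q : ℕ) * p = (q' : ℕ) * p' := by
        rw [mul_comm, h1, mul_comm]
      obtain ⟨e1, e2⟩ := prime_pair_eq hqp hpp hqp' hpp' h1' hle' hle''
      ext <;> simp [e1, e2]
  -- summability of the target
  have hg : Summable fun w : (NkSet P 2) × Bool => (w.1 : ℝ) ^ (-t) := by
    have := (hsumN2 t ht1).mul_of_nonneg (summable_of_finite_support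
      (Set.toFinite _) : Summable fun _ : Bool => (1:ℝ))
      (fun n => Real.rpow_nonneg (by positivity) _) (fun _ => zero_le_one)
    simpa using this
  have hkey : S * S ≤ 2 * T := by
    rw [hmul]
    have h1 : ∑' z : P × P, (z.1 : ℝ) ^ (-t) * (z.2 : ℝ) ^ (-t)
        ≤ ∑' w : (NkSet P 2) × Bool, (w.1 : ℝ) ^ (-t) := by
      apply Summable.tsum_le_tsum_of_inj e heinj
        (fun w _ => Real.rpow_nonneg (by positivity) _) _ hprod hg
      rintro ⟨p, q⟩
      have : (((p : ℕ) * (q : ℕ) : ℕ) : ℝ) ^ (-t) = (p : ℝ) ^ (-t) * (q : ℝ) ^ (-t) := by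
        rw [Nat.cast_mul, Real.mul_rpow (hppos p).le (hppos q).le]
      simp only [he]
      exact le_of_eq this.symm
    refine h1.trans_eq ?_
    rw [Summable.tsum_prod' hg (fun n => by
      exact summable_of_finite_support (Set.toFinite _))]
    calc ∑' (n : NkSet P 2), ∑' (_ : Bool), (n : ℝ) ^ (-t)
        = ∑' (n : NkSet P 2), 2 * (n : ℝ) ^ (-t) := by
          apply tsum_congr
          intro n
          rw [tsum_bool]
          ring
      _ = 2 * T := tsum_mul_left
  nlinarith
end
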